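/- arXiv:1505.00250 — 10 statements merged into one kernel-verified Lean document; each statement's English description precedes it below -/
import Mathlib

section
/- For every integer t ≥ 1, the following identity holds in the ring of formal power series ℤ⟦X⟧: (∑_{n≥1} p(n,t)·Xⁿ) · (1 − X^t) · ∏_{i=1}^{t} (1 − X^i) = 1 − ∏_{i=1}^{t} (1 − X^i). -/
/-!
Partitions of `n` into parts at most `t` have generating function `∏_{i=1}^t (1 - X^i)⁻¹`
(Mathlib's `Nat.Partition.hasProd_powerSeriesMk_card_restricted`). A partition with bounded
difference `t` either has all its parts at most `t`, or its largest part `M` exceeds `t`. In the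
second case `M - t` is at most every other part, so replacing `M` by `M - t` is a bijection onto
the partitions of `n - t` with bounded difference `t`, inverted by raising a smallest part by `t`.
Hence `p(n, t) = #{parts ≤ t} + p(n - t, t)` for `n ≥ 1`, which is
`P_t (1 - X^t) = ∏_{i=1}^t (1 - X^i)⁻¹ - 1`.
-/

/-- The paper's `p(n, t)`, with the bound on largest minus smallest part stated pairwise. -/
noncomputable def boundedDiffCount (n t : ℕ) : ℕ :=
  Nat.card { P : n.Partition // P.parts ≠ 0 ∧ ∀ a ∈ P.parts, ∀ b ∈ P.parts, a ≤ b + t }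

open PowerSeries Finset

theorem Multiset.sup_mem_of_ne_zero {α : Type*} [LinearOrder α] [OrderBot α] {s : Multiset α}
    (hs : s ≠ 0) : s.sup ∈ s := by
  obtain ⟨y, hy, hmax⟩ := s.exists_max_image id hs
  rwa [le_antisymm (Multiset.sup_le.2 hmax) (Multiset.le_sup hy)]

theorem Multiset.eq_and_eq_of_cons_eq_cons_of_forall_le {α : Type*} [PartialOrder α]
    {a b : α} {s s' : Multiset α} (ha : ∀ x ∈ s, a ≤ x) (hb : ∀ x ∈ s', b ≤ x)
    (h : a ::ₘ s = b ::ₘ s') : a = b ∧ s = s' := by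
  have hab : a ≤ b := by
    rcases Multiset.mem_cons.1 (h ▸ Multiset.mem_cons_self b s') with hba | hbs
    exacts [hba.ge, ha b hbs]
  have hba : b ≤ a := by
    rcases Multiset.mem_cons.1 (h.symm ▸ Multiset.mem_cons_self a s) with hab | has
    exacts [hab.ge, hb a has]
  obtain rfl := le_antisymm hab hba
  exact ⟨rfl, (Multiset.cons_inj_right a).1 h⟩

theorem Multiset.forall_le_add_cons_erase {s : Multiset ℕ} {t a b : ℕ}
    (hs : ∀ x ∈ s, ∀ y ∈ s, x ≤ y + t) (hb : ∀ x ∈ s.erase a, x ≤ b + t ∧ b ≤ x + t) :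
    ∀ x ∈ b ::ₘ s.erase a, ∀ y ∈ b ::ₘ s.erase a, x ≤ y + t := by
  simp only [Multiset.forall_mem_cons]
  exact ⟨⟨by omega, fun y hy ↦ (hb y hy).2⟩, fun x hx ↦
    ⟨(hb x hx).1, fun y hy ↦ hs x (Multiset.mem_of_mem_erase hx) y (Multiset.mem_of_mem_erase hy)⟩⟩

namespace Nat.Partition

variable {n m t : ℕ}

def replacePart (P : n.Partition) {a b : ℕ} (ha : a ∈ P.parts) (hb : 0 < b)
    (hm : m + a = n + b) : m.Partition where
  parts := b ::ₘ P.parts.erase a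
  parts_pos hi := by
    rcases Multiset.mem_cons.1 hi with rfl | hi
    exacts [hb, P.parts_pos (Multiset.mem_of_mem_erase hi)]
  parts_sum := by
    have hsum := congrArg Multiset.sum (Multiset.cons_erase ha)
    rw [Multiset.sum_cons, P.parts_sum] at hsum
    rw [Multiset.sum_cons]
    omega

@[simp]
theorem parts_replacePart (P : n.Partition) {a b : ℕ} (ha : a ∈ P.parts) (hb : 0 < b)
    (hm : m + a = n + b) : (P.replacePart ha hb hm).parts = b ::ₘ P.parts.erase a :=
  rfl

def boundedDiff (n t : ℕ) : Finset n.Partition :=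
  univ.filter fun P ↦ P.parts ≠ 0 ∧ ∀ a ∈ P.parts, ∀ b ∈ P.parts, a ≤ b + t

theorem mem_boundedDiff {P : n.Partition} :
    P ∈ boundedDiff n t ↔ P.parts ≠ 0 ∧ ∀ a ∈ P.parts, ∀ b ∈ P.parts, a ≤ b + t := by
  simp [boundedDiff]

@[simp]
theorem boundedDiff_zero : boundedDiff 0 t = ∅ := by
  ext P
  simp [mem_boundedDiff]

theorem parts_ne_zero (hn : n ≠ 0) (P : n.Partition) : P.parts ≠ 0 := by
  rintro h
  exact hn (P.parts_sum ▸ h ▸ Multiset.sum_zero)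

theorem filter_not_lt_sup_boundedDiff (hn : n ≠ 0) :
    (boundedDiff n t).filter (fun P ↦ ¬ t < P.parts.sup) = restricted n (· ≤ t) := by
  ext P
  simp only [mem_filter, mem_boundedDiff, restricted, mem_univ, true_and, not_lt, Multiset.sup_le]
  exact ⟨And.right, fun h ↦ ⟨⟨parts_ne_zero hn P, fun a ha b _ ↦ (h a ha).trans le_add_self⟩, h⟩⟩

def lowerLargestPart (t : ℕ) (P : n.Partition) (hP : P.parts ≠ 0) (ht : t < P.parts.sup) :
    (n - t).Partition :=
  P.replacePart (Multiset.sup_mem_of_ne_zero hP) (Nat.sub_pos_of_lt ht)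
    (by have := le_of_mem_parts (Multiset.sup_mem_of_ne_zero hP); omega)

@[simp]
theorem parts_lowerLargestPart (P : n.Partition) (hP : P.parts ≠ 0) (ht : t < P.parts.sup) :
    (P.lowerLargestPart t hP ht).parts = (P.parts.sup - t) ::ₘ P.parts.erase P.parts.sup :=
  rfl

theorem lowerLargestPart_mem_boundedDiff {P : n.Partition} (hP : P ∈ boundedDiff n t)
    (ht : t < P.parts.sup) :
    P.lowerLargestPart t (mem_boundedDiff.1 hP).1 ht ∈ boundedDiff (n - t) t := by
  obtain ⟨hne, hbd⟩ := mem_boundedDiff.1 hP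
  have hM := Multiset.sup_mem_of_ne_zero hne
  refine mem_boundedDiff.2 ⟨Multiset.cons_ne_zero, Multiset.forall_le_add_cons_erase hbd ?_⟩
  intro x hx
  have hx := Multiset.mem_of_mem_erase hx
  have := Multiset.le_sup hx
  have := hbd _ hM x hx
  omega

theorem lowerLargestPart_injective {P P' : n.Partition} (hP : P ∈ boundedDiff n t)
    (hP' : P' ∈ boundedDiff n t) (ht : t < P.parts.sup) (ht' : t < P'.parts.sup)
    (h : P.lowerLargestPart t (mem_boundedDiff.1 hP).1 ht =
      P'.lowerLargestPart t (mem_boundedDiff.1 hP').1 ht') : P = P' := by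
  obtain ⟨hne, hbd⟩ := mem_boundedDiff.1 hP
  obtain ⟨hne', hbd'⟩ := mem_boundedDiff.1 hP'
  have hM := Multiset.sup_mem_of_ne_zero hne
  have hM' := Multiset.sup_mem_of_ne_zero hne'
  obtain ⟨hlow, herase⟩ := Multiset.eq_and_eq_of_cons_eq_cons_of_forall_le
    (fun x hx ↦ by have := hbd _ hM x (Multiset.mem_of_mem_erase hx); omega)
    (fun x hx ↦ by have := hbd' _ hM' x (Multiset.mem_of_mem_erase hx); omega)
    (congrArg Nat.Partition.parts h)
  have hsup : P.parts.sup = P'.parts.sup := by omega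
  ext1
  rw [← Multiset.cons_erase hM, ← Multiset.cons_erase hM', herase, hsup]

theorem exists_lowerLargestPart_eq {Q : (n - t).Partition} (hQ : Q ∈ boundedDiff (n - t) t) :
    ∃ (P : n.Partition) (hP : P ∈ boundedDiff n t) (ht : t < P.parts.sup),
      P.lowerLargestPart t (mem_boundedDiff.1 hP).1 ht = Q := by
  obtain ⟨hne, hbd⟩ := mem_boundedDiff.1 hQ
  obtain ⟨m, hm, hmin⟩ := Q.parts.exists_min_image id hne
  have hm_pos := Q.parts_pos hm
  have hm_le := le_of_mem_parts hm
  let P : n.Partition := Q.replacePart hm (b := m + t) (by omega) (by omega)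
  have hbound : ∀ x ∈ Q.parts.erase m, x ≤ m + t + t ∧ m + t ≤ x + t := fun x hx ↦
    ⟨by have := hbd x (Multiset.mem_of_mem_erase hx) m hm; omega,
      by have : m ≤ x := hmin x (Multiset.mem_of_mem_erase hx); omega⟩
  have hsup : P.parts.sup = m + t := by
    refine le_antisymm ?_ (Multiset.le_sup (Multiset.mem_cons_self _ _))
    simp only [P, parts_replacePart, Multiset.sup_le, Multiset.forall_mem_cons]
    exact ⟨le_rfl, fun x hx ↦ by have := hbd x (Multiset.mem_of_mem_erase hx) m hm; omega⟩
  refine ⟨P, mem_boundedDiff.2 ⟨Multiset.cons_ne_zero, ?_⟩, by omega, ?_⟩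
  · exact Multiset.forall_le_add_cons_erase hbd hbound
  · ext1
    rw [parts_lowerLargestPart, hsup, Nat.add_sub_cancel]
    simp only [P, parts_replacePart, Multiset.erase_cons_head, Multiset.cons_erase hm]

theorem card_filter_lt_sup_boundedDiff :
    #((boundedDiff n t).filter fun P ↦ t < P.parts.sup) = #(boundedDiff (n - t) t) := by
  refine card_bij
    (fun P hP ↦ P.lowerLargestPart t (mem_boundedDiff.1 (mem_filter.1 hP).1).1 (mem_filter.1 hP).2)
    (fun _ hP ↦ lowerLargestPart_mem_boundedDiff (mem_filter.1 hP).1 _)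
    (fun _ hP _ hP' ↦ lowerLargestPart_injective (mem_filter.1 hP).1 (mem_filter.1 hP').1 _ _)
    fun Q hQ ↦ ?_
  obtain ⟨P, hP, ht, rfl⟩ := exists_lowerLargestPart_eq hQ
  exact ⟨P, mem_filter.2 ⟨hP, ht⟩, rfl⟩

theorem card_boundedDiff (hn : n ≠ 0) :
    #(boundedDiff n t) = #(restricted n (· ≤ t)) + #(boundedDiff (n - t) t) := by
  rw [← card_filter_lt_sup_boundedDiff, ← filter_not_lt_sup_boundedDiff hn, add_comm,
    card_filter_add_card_filter_not]

theorem powerSeriesMk_card_boundedDiff_mul_one_sub_X_pow (R : Type*) [CommRing R] (t : ℕ) :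
    (PowerSeries.mk fun n ↦ (#(boundedDiff n t) : R)) * (1 - X ^ t) =
      (PowerSeries.mk fun n ↦ (#(restricted n (· ≤ t)) : R)) - 1 := by
  ext n
  simp only [mul_sub, mul_one, map_sub, coeff_mul_X_pow', coeff_one, coeff_mk]
  rcases eq_or_ne n 0 with rfl | hn
  · rw [Nat.zero_sub]
    simp [restricted]
  rw [card_boundedDiff hn, if_neg hn]
  split_ifs with htn
  · push_cast
    ring
  · rw [Nat.sub_eq_zero_of_le (le_of_not_ge htn), boundedDiff_zero, card_empty]
    simp

open PowerSeries.WithPiTopology in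
theorem powerSeriesMk_card_restricted_le_mul_prod_one_sub_X_pow (R : Type*) [CommRing R] (t : ℕ) :
    (PowerSeries.mk fun n ↦ (#(restricted n (· ≤ t)) : R)) * ∏ i ∈ Icc 1 t, (1 - X ^ i) = 1 := by
  -- any topology would do: it only serves to read off the finite product from the infinite one
  let _ : TopologicalSpace R := ⊥
  have : DiscreteTopology R := ⟨rfl⟩
  rw [← (hasProd_powerSeriesMk_card_restricted R (· ≤ t)).tprod_eq,
    tprod_eq_prod (s := range t) fun i hi ↦ if_neg (by simpa using hi),
    ← Ico_add_one_right_eq_Icc, prod_Ico_eq_prod_range, Nat.add_sub_cancel, ← prod_mul_distrib]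
  refine prod_eq_one fun i hi ↦ ?_
  rw [if_pos (Nat.succ_le_of_lt (mem_range.1 hi)), add_comm 1 i]
  simp_rw [pow_mul]
  exact tsum_pow_mul_one_sub_of_constantCoeff_eq_zero (by simp)

end Nat.Partition

open Nat.Partition

theorem boundedDiffCount_eq_card (n t : ℕ) : boundedDiffCount n t = #(boundedDiff n t) := by
  rw [boundedDiffCount, Nat.card_eq_fintype_card, Fintype.card_subtype]
  rfl

theorem bounded_differences_generating_function_general (t : ℕ) :
    (PowerSeries.mk fun n => if n = 0 then 0 else (boundedDiffCount n t : ℤ))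
        * (1 - (PowerSeries.X : PowerSeries ℤ) ^ t)
        * ∏ i ∈ Finset.Icc 1 t, (1 - (PowerSeries.X : PowerSeries ℤ) ^ i)
      = 1 - ∏ i ∈ Finset.Icc 1 t, (1 - (PowerSeries.X : PowerSeries ℤ) ^ i) := by
  have hseries : (PowerSeries.mk fun n => if n = 0 then 0 else (boundedDiffCount n t : ℤ)) =
      PowerSeries.mk fun n ↦ (#(boundedDiff n t) : ℤ) := by
    ext n
    rcases eq_or_ne n 0 with rfl | hn
    · simp
    · simp [hn, boundedDiffCount_eq_card]
  rw [hseries, powerSeriesMk_card_boundedDiff_mul_one_sub_X_pow, sub_mul, one_mul,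
    powerSeriesMk_card_restricted_le_mul_prod_one_sub_X_pow]

/-- The generating function identity
`(∑_{n≥1} p(n,t) Xⁿ) (1 - X^t) ∏_{i=1}^t (1 - X^i) = 1 - ∏_{i=1}^t (1 - X^i)`
in `ℤ⟦X⟧`. -/
theorem bounded_differences_generating_function (t : ℕ) (ht : 1 ≤ t) :
    (PowerSeries.mk fun n => if n = 0 then 0 else (boundedDiffCount n t : ℤ))
        * (1 - (PowerSeries.X : PowerSeries ℤ) ^ t)
        * ∏ i ∈ Finset.Icc 1 t, (1 - (PowerSeries.X : PowerSeries ℤ) ^ i)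
      = 1 - ∏ i ∈ Finset.Icc 1 t, (1 - (PowerSeries.X : PowerSeries ℤ) ^ i) :=
  bounded_differences_generating_function_general t
end

section
/- For every integer n ≥ 1, the number of partitions of n whose largest part exceeds its smallest part by at most 1 equals n; that is, p(n,1) = n. -/
/-!
A multiset of naturals whose elements differ pairwise by at most one consists of some copies of
a value `a` and some copies of `a + 1`; its size `k` and its sum `n` then force it to be
`⌊n/k⌋` repeated `k - n % k` times together with `⌊n/k⌋ + 1` repeated `n % k` times.
So a partition of `n` with bounded difference `1` is determined by its number of parts, and every
number of parts `1 ≤ k ≤ n` occurs.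
-/

open Multiset

lemma Multiset.eq_replicate_count_add_replicate_count {α : Type*} [DecidableEq α]
    {s : Multiset α} {a b : α} (hab : a ≠ b) (hs : ∀ x ∈ s, x = a ∨ x = b) :
    s = replicate (count a s) a + replicate (count b s) b := by
  have hfilter : s.filter (fun x => ¬x = a) = s.filter (· = b) :=
    filter_congr fun x hx => by rcases hs x hx with rfl | rfl <;> simp [hab, Ne.symm hab]
  rw [← filter_eq', ← filter_eq', ← hfilter, filter_add_not]

def balancedParts (n k : ℕ) : Multiset ℕ :=
  replicate (k - n % k) (n / k) + replicate (n % k) (n / k + 1)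

lemma card_balancedParts {k : ℕ} (hk : 0 < k) (n : ℕ) : card (balancedParts n k) = k := by
  have := Nat.mod_lt n hk
  simp only [balancedParts, card_add, card_replicate]
  omega

lemma sum_balancedParts (n k : ℕ) : (balancedParts n k).sum = n := by
  rcases Nat.eq_zero_or_pos k with rfl | hk
  · simp [balancedParts]
  · have hdiv := Nat.div_add_mod n k
    have hmod := (Nat.mod_lt n hk).le
    simp only [balancedParts, sum_add, sum_replicate, smul_eq_mul]
    zify [hmod] at hdiv ⊢
    linear_combination hdiv

lemma pos_of_mem_balancedParts {n k a : ℕ} (hkn : k ≤ n) (ha : a ∈ balancedParts n k) :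
    0 < a := by
  rcases Nat.eq_zero_or_pos k with rfl | hk
  · simp only [balancedParts, Nat.mod_zero, Nat.div_zero, Nat.zero_sub, replicate_zero,
      zero_add] at ha
    rw [eq_of_mem_replicate ha]
    exact one_pos
  · have := Nat.div_pos hkn hk
    simp only [balancedParts, mem_add, mem_replicate] at ha
    omega

lemma le_add_one_of_mem_balancedParts {n k a b : ℕ} (ha : a ∈ balancedParts n k)
    (hb : b ∈ balancedParts n k) : a ≤ b + 1 := by
  simp only [balancedParts, mem_add, mem_replicate] at ha hb
  omega

lemma balancedParts_mul_add {k c : ℕ} (hc : c < k) (a : ℕ) :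
    balancedParts (k * a + c) k = replicate (k - c) a + replicate c (a + 1) := by
  have hk : 0 < k := by omega
  rw [balancedParts, Nat.mul_add_div hk, Nat.mul_add_mod, Nat.div_eq_of_lt hc,
    Nat.mod_eq_of_lt hc, add_zero]

lemma Multiset.eq_balancedParts {s : Multiset ℕ} (hs : ∀ a ∈ s, ∀ b ∈ s, a ≤ b + 1) :
    s = balancedParts s.sum (card s) := by
  rcases eq_or_ne s 0 with rfl | hne
  · simp [balancedParts]
  obtain ⟨a, ha, hmin⟩ := s.toFinset.exists_min_image id (by simpa using hne)
  simp only [mem_toFinset, id] at ha hmin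
  have hsplit := eq_replicate_count_add_replicate_count (Nat.lt_add_one a).ne fun b hb => by
    have := hs b hb a ha
    have := hmin b hb
    omega
  have hcount : 0 < count a s := count_pos.mpr ha
  set d := count a s
  set c := count (a + 1) s
  have hcard : card s = d + c := by rw [hsplit]; simp
  have hsum : s.sum = (d + c) * a + c := by
    rw [hsplit]
    simp only [sum_add, sum_replicate, smul_eq_mul]
    ring
  rw [hcard, hsum, balancedParts_mul_add (by omega), Nat.add_sub_cancel]
  exact hsplit

lemma Nat.Partition.card_parts_le {n : ℕ} (P : n.Partition) : card P.parts ≤ n := by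
  simpa [P.parts_sum] using card_nsmul_le_sum fun _ => P.parts_pos

def Nat.Partition.balanced (n k : ℕ) (hkn : k ≤ n) : n.Partition where
  parts := balancedParts n k
  parts_pos := pos_of_mem_balancedParts hkn
  parts_sum := sum_balancedParts n k

lemma bijective_card_parts_of_boundedDiff_one (n : ℕ) :
    Function.Bijective fun P : {P : n.Partition // P.parts ≠ 0 ∧
        ∀ a ∈ P.parts, ∀ b ∈ P.parts, a ≤ b + 1} =>
      (⟨card P.1.parts, card_pos.mpr P.2.1, P.1.card_parts_le⟩ : Set.Icc 1 n) := by
  constructor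
  · rintro ⟨P, _, hP⟩ ⟨Q, _, hQ⟩ hPQ
    have hcard : card P.parts = card Q.parts := congrArg Subtype.val hPQ
    refine Subtype.ext (Nat.Partition.ext ?_)
    rw [eq_balancedParts hP, eq_balancedParts hQ, P.parts_sum, Q.parts_sum, hcard]
  · rintro ⟨k, hk, hkn⟩
    refine ⟨⟨Nat.Partition.balanced n k hkn, ?_, fun a ha b hb =>
      le_add_one_of_mem_balancedParts ha hb⟩, Subtype.ext (card_balancedParts hk n)⟩
    exact card_pos.mp ((card_balancedParts hk n).symm ▸ hk)

theorem bounded_diff_one_eq_n_general (n : ℕ) :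
    boundedDiffCount n 1 = n := by
  rw [boundedDiffCount, Nat.card_eq_of_bijective _ (bijective_card_parts_of_boundedDiff_one n),
    Nat.card_eq_fintype_card]
  simp

/-- The number of partitions of `n` whose largest part exceeds its smallest part by at
most `1` equals `n`. -/
theorem bounded_diff_one_eq_n (n : ℕ) (hn : 1 ≤ n) :
    boundedDiffCount n 1 = n :=
  bounded_diff_one_eq_n_general n
end

section
/- For every integer k ≥ 0, p(2k, 2) = 2·C(k+1, 2) − C(k, 2), where C(a,b) denotes the binomial coefficient a choose b. -/
open Finset

namespace BoundedDiffTwo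

def shape (j m x y : ℕ) : Multiset ℕ :=
  .replicate (j - x) m + .replicate (x - y) (m + 1) + .replicate y (m + 2)

variable {n j m x y v : ℕ}

lemma bounds_of_mem_shape (hv : v ∈ shape j m x y) : m ≤ v ∧ v ≤ m + 2 := by
  simp only [shape, Multiset.mem_add, Multiset.mem_replicate] at hv
  omega

lemma self_mem_shape (hxj : x < j) : m ∈ shape j m x y := by
  simp [shape, Multiset.mem_replicate]
  omega

lemma count_shape_self : (shape j m x y).count m = j - x := by
  simp [shape, Multiset.count_replicate]

lemma count_shape_add_one : (shape j m x y).count (m + 1) = x - y := by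
  simp [shape, Multiset.count_replicate]

lemma count_shape_add_two : (shape j m x y).count (m + 2) = y := by
  simp [shape, Multiset.count_replicate]

lemma sum_shape (hyx : y ≤ x) (hxj : x < j) : (shape j m x y).sum = j * m + x + y := by
  simp only [shape, Multiset.sum_add, Multiset.sum_replicate, smul_eq_mul]
  zify [hyx, hxj.le]
  ring

lemma eq_of_shape_eq {j' m' x' y' : ℕ} (hyx : y ≤ x) (hxj : x < j) (hyx' : y' ≤ x')
    (hxj' : x' < j') (h : shape j m x y = shape j' m' x' y') :
    j = j' ∧ m = m' ∧ x = x' ∧ y = y' := by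
  obtain rfl : m = m' := le_antisymm (bounds_of_mem_shape (h ▸ self_mem_shape hxj')).1
    (bounds_of_mem_shape (h ▸ self_mem_shape hxj)).1
  have h₀ := congrArg (Multiset.count m) h
  have h₁ := congrArg (Multiset.count (m + 1)) h
  have h₂ := congrArg (Multiset.count (m + 2)) h
  simp only [count_shape_self, count_shape_add_one, count_shape_add_two] at h₀ h₁ h₂
  omega

lemma eq_shape_of_forall_mem {s : Multiset ℕ} (h : ∀ v ∈ s, m ≤ v ∧ v ≤ m + 2) :
    s = shape (s.count m + s.count (m + 1) + s.count (m + 2)) m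
      (s.count (m + 1) + s.count (m + 2)) (s.count (m + 2)) := by
  ext v
  simp only [shape, Multiset.count_add, Multiset.count_replicate]
  by_cases hv : v ∈ s
  · have := h v hv
    split_ifs <;> subst_vars <;> omega
  · have := Multiset.count_eq_zero_of_notMem hv
    split_ifs <;> subst_vars <;> omega

def shapes (n j : ℕ) : Finset (ℕ × ℕ × ℕ) :=
  (Icc 1 n ×ˢ range j ×ˢ range j).filter fun p => p.2.2 ≤ p.2.1 ∧ j * p.1 + p.2.1 + p.2.2 = n

lemma mem_shapes : (m, x, y) ∈ shapes n j ↔ 1 ≤ m ∧ y ≤ x ∧ x < j ∧ j * m + x + y = n := by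
  simp only [shapes, mem_filter, mem_product, mem_Icc, mem_range]
  constructor
  · rintro ⟨⟨⟨hm, -⟩, hxj, -⟩, hyx, hsum⟩
    exact ⟨hm, hyx, hxj, hsum⟩
  · rintro ⟨hm, hyx, hxj, hsum⟩
    have : m ≤ j * m := Nat.le_mul_of_pos_left m (by omega)
    omega

lemma mem_Icc_of_mem_shapes (h : (m, x, y) ∈ shapes n j) : j ∈ Icc 1 n := by
  obtain ⟨hm, -, hxj, hsum⟩ := mem_shapes.1 h
  have : j ≤ j * m := Nat.le_mul_of_pos_right j hm
  exact mem_Icc.2 ⟨by omega, by omega⟩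

def partitionOfMemShapes (h : (m, x, y) ∈ shapes n j) : n.Partition where
  parts := shape j m x y
  parts_pos hv := by
    have := bounds_of_mem_shape hv
    have := (mem_shapes.1 h).1
    omega
  parts_sum := by
    obtain ⟨-, hyx, hxj, hsum⟩ := mem_shapes.1 h
    rw [sum_shape hyx hxj, hsum]

lemma boundedDiffCount_two_eq_sum_card_shapes (n : ℕ) :
    boundedDiffCount n 2 = ∑ j ∈ Icc 1 n, #(shapes n j) := by
  rw [← card_sigma, ← Nat.card_eq_finsetCard]
  symm
  refine Nat.card_eq_of_bijective
    (fun ⟨⟨j, m, x, y⟩, h⟩ => ⟨partitionOfMemShapes (mem_sigma.1 h).2, ?_, ?_⟩) ⟨?_, ?_⟩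
  · exact ne_of_mem_of_not_mem' (self_mem_shape (mem_shapes.1 (mem_sigma.1 h).2).2.2.1)
      (Multiset.notMem_zero m)
  · intro a ha b hb
    have := bounds_of_mem_shape ha
    have := bounds_of_mem_shape hb
    omega
  · rintro ⟨⟨j, m, x, y⟩, h⟩ ⟨⟨j', m', x', y'⟩, h'⟩ heq
    obtain ⟨-, hyx, hxj, -⟩ := mem_shapes.1 (mem_sigma.1 h).2
    obtain ⟨-, hyx', hxj', -⟩ := mem_shapes.1 (mem_sigma.1 h').2
    obtain ⟨rfl, rfl, rfl, rfl⟩ :=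
      eq_of_shape_eq hyx hxj hyx' hxj' (congrArg (fun P => P.1.parts) heq)
    rfl
  · rintro ⟨P, hne, hbd⟩
    obtain ⟨m, hm, hmin⟩ := Multiset.exists_min_image id hne
    have hP := eq_shape_of_forall_mem (m := m) fun v hv => ⟨hmin v hv, hbd v hv m hm⟩
    have hcount := Multiset.count_pos.2 hm
    have hshapes : (m, P.parts.count (m + 1) + P.parts.count (m + 2), P.parts.count (m + 2)) ∈
        shapes n (P.parts.count m + P.parts.count (m + 1) + P.parts.count (m + 2)) := by
      refine mem_shapes.2 ⟨P.parts_pos hm, by omega, by omega, ?_⟩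
      rw [← sum_shape (by omega) (by omega), ← hP, P.parts_sum]
    exact ⟨⟨⟨_, _⟩, mem_sigma.2 ⟨mem_Icc_of_mem_shapes hshapes, hshapes⟩⟩,
      Subtype.ext (Nat.Partition.ext hP.symm)⟩

lemma mem_shapes_iff_of_lt_two_mul (hn : n < 2 * j) :
    (m, x, y) ∈ shapes n j ↔ m = 1 ∧ y ≤ x ∧ x < j ∧ j + x + y = n := by
  rw [mem_shapes]
  constructor
  · rintro ⟨hm, hyx, hxj, hsum⟩
    have : m < 2 := Nat.lt_of_mul_lt_mul_left (a := j) (by omega)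
    obtain rfl : m = 1 := by omega
    exact ⟨rfl, hyx, hxj, by simpa using hsum⟩
  · rintro ⟨rfl, hyx, hxj, hsum⟩
    exact ⟨le_rfl, hyx, hxj, by simpa using hsum⟩

lemma card_shapes_of_lt_two_mul (hjn : j ≤ n) (hn : n < 2 * j) :
    #(shapes n j) = (n - j) / 2 + 1 := by
  rw [← card_range ((n - j) / 2 + 1)]
  refine card_nbij' (fun p => p.2.2) (fun y => (1, n - j - y, y)) ?_ ?_ ?_ ?_
  · rintro ⟨m, x, y⟩ h
    have := (mem_shapes_iff_of_lt_two_mul hn).1 h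
    simp only [mem_coe, mem_range]
    omega
  · intro y hy
    rw [mem_coe, mem_range] at hy
    refine mem_coe.2 ((mem_shapes_iff_of_lt_two_mul hn).2 ⟨rfl, ?_, ?_, ?_⟩) <;> omega
  · rintro ⟨m, x, y⟩ h
    have := (mem_shapes_iff_of_lt_two_mul hn).1 h
    simp only [Prod.mk.injEq, and_true]
    omega
  · intro y _
    rfl

lemma mem_shapes_iff_of_two_mul_le (hj : 0 < j) (hjn : 2 * j ≤ n) :
    (m, x, y) ∈ shapes n j ↔
      y ≤ x ∧ x < j ∧ (m = n / j ∧ x + y = n % j ∨ m + 1 = n / j ∧ x + y = n % j + j) := by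
  have hq : 2 ≤ n / j := (Nat.le_div_iff_mul_le hj).2 (by omega)
  have hdiv := Nat.div_add_mod n j
  rw [mem_shapes]
  constructor
  · rintro ⟨hm, hyx, hxj, hsum⟩
    refine ⟨hyx, hxj, ?_⟩
    by_cases hxy : x + y < j
    · left
      obtain ⟨h₁, h₂⟩ := (Nat.div_mod_unique (a := n) (d := m) (c := x + y) hj).2 ⟨by omega, hxy⟩
      exact ⟨h₁.symm, h₂.symm⟩
    · right
      obtain ⟨h₁, h₂⟩ := (Nat.div_mod_unique (a := n) (d := m + 1) (c := x + y - j) hj).2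
        ⟨by rw [mul_add_one]; omega, by omega⟩
      omega
  · rintro ⟨hyx, hxj, ⟨rfl, hxy⟩ | ⟨hm, hxy⟩⟩
    · exact ⟨by omega, hyx, hxj, by omega⟩
    · rw [← hm, mul_add_one] at hdiv
      exact ⟨by omega, hyx, hxj, by omega⟩

lemma card_shapes_of_two_mul_le (hj : 0 < j) (hjn : 2 * j ≤ n) (hn : Even n) :
    #(shapes n j) = j / 2 + 1 := by
  have hmem {m x y : ℕ} := mem_shapes_iff_of_two_mul_le (m := m) (x := x) (y := y) hj hjn
  have hr : n % j < j := Nat.mod_lt n hj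
  have hparity : j % 2 = 0 → n % j % 2 = 0 := fun hj₂ => by
    rw [Nat.mod_mod_of_dvd n (Nat.dvd_of_mod_eq_zero hj₂)]
    exact Nat.even_iff.1 hn
  have hq : 2 ≤ n / j := (Nat.le_div_iff_mul_le hj).2 (by omega)
  generalize n / j = q at hmem hq
  generalize n % j = r at hmem hr hparity
  have hdisj : Disjoint (range (r / 2 + 1)) (Ioc r ((r + j) / 2)) := by
    rw [disjoint_left]
    intro y hy hy'
    simp only [mem_range, mem_Ioc] at hy hy'
    omega
  -- An element is determined by `y`, which ranges over `[0, r / 2]` for `m = q` and over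
  -- `(r, (r + j) / 2]` for `m = q - 1`.
  calc #(shapes n j) = #(range (r / 2 + 1) ∪ Ioc r ((r + j) / 2)) := by
        refine card_nbij' (fun p => p.2.2)
          (fun y => if y ≤ r / 2 then (q, r - y, y) else (q - 1, r + j - y, y)) ?_ ?_ ?_ ?_
        · rintro ⟨m, x, y⟩ h
          have := hmem.1 h
          simp only [mem_coe, mem_union, mem_range, mem_Ioc]
          omega
        · intro y hy
          simp only [mem_coe, mem_union, mem_range, mem_Ioc] at hy
          rw [mem_coe]
          dsimp only
          split_ifs <;> refine hmem.2 ⟨?_, ?_, ?_⟩ <;> omega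
        · rintro ⟨m, x, y⟩ h
          have := hmem.1 h
          dsimp only
          split_ifs <;> simp only [Prod.mk.injEq, and_true] <;> omega
        · intro y _
          dsimp only
          split_ifs <;> rfl
    _ = j / 2 + 1 := by
        rw [card_union_of_disjoint hdisj, card_range, Nat.card_Ioc]
        omega

lemma sum_card_shapes_two_mul (k : ℕ) :
    ∑ j ∈ Icc 1 (2 * k), #(shapes (2 * k) j) = ∑ i ∈ range k, (i + 2) := by
  rw [← Ico_add_one_right_eq_Icc, sum_Ico_eq_sum_range, show 2 * k + 1 - 1 = k + k by omega,
    sum_range_add, ← sum_range_reflect (fun i => #(shapes (2 * k) (1 + (k + i)))) k,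
    ← sum_add_distrib]
  refine sum_congr rfl fun i hi => ?_
  rw [mem_range] at hi
  rw [card_shapes_of_two_mul_le (by omega) (by omega) (even_two_mul k),
    card_shapes_of_lt_two_mul (by omega) (by omega)]
  omega

end BoundedDiffTwo

lemma Nat.succ_choose_two (n : ℕ) : (n + 1).choose 2 = n + n.choose 2 := by
  rw [Nat.choose_succ_succ, Nat.choose_one_right]

lemma Finset.sum_range_add_two_add_choose_two (k : ℕ) :
    ∑ i ∈ range k, (i + 2) + k.choose 2 = 2 * (k + 1).choose 2 := by
  induction k with
  | zero => rfl
  | succ k ih =>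
    rw [sum_range_succ, Nat.succ_choose_two (k + 1), Nat.succ_choose_two k]
    rw [Nat.succ_choose_two k] at ih
    omega

/-- `p(2k, 2) = 2 C(k+1, 2) - C(k, 2)`. -/
theorem bounded_diff_two_even (k : ℕ) :
    (boundedDiffCount (2 * k) 2 : ℤ)
      = 2 * ((k + 1).choose 2 : ℤ) - (k.choose 2 : ℤ) := by
  have hcount := BoundedDiffTwo.boundedDiffCount_two_eq_sum_card_shapes (2 * k)
  rw [BoundedDiffTwo.sum_card_shapes_two_mul] at hcount
  have := sum_range_add_two_add_choose_two k
  omega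
end

section
/- Fix an integer t ≥ 1. For every integer m ≥ 1, the half-open simplicial cone C_m admits the inequality description C_m = { x ∈ ℝ^{t+1} : x_0 ≥ x_1 ≥ … ≥ x_{t−1} ≥ 0, ⟨u_{m−1}, x⟩ ≥ 0, and ⟨u_m, x⟩ < 0 }. -/
/-- The generator `v_i ∈ ℝ^{t+1}`: coordinates `0,…,(i-1) mod t` equal `1`, the remaining
coordinates among `0,…,t-1` equal `0`, and the last coordinate equals `((i-1) div t)·t`. -/
noncomputable def geneV (t : ℕ) (i : ℕ) : Fin (t + 1) → ℝ := fun l =>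
  if (l : ℕ) = t then (((i - 1) / t) * t : ℕ)
  else if (l : ℕ) ≤ (i - 1) % t then 1 else 0

/-- The half-open simplicial cone `C_m`, generated by `v_m, …, v_{m+t}` with the facet
opposite the first generator open. -/
noncomputable def coneC (t : ℕ) (m : ℕ) : Set (Fin (t + 1) → ℝ) :=
  { x | ∃ α : Fin (t + 1) → ℝ, 0 < α 0 ∧ (∀ i, 0 ≤ α i) ∧
      x = ∑ i : Fin (t + 1), α i • geneV t (m + (i : ℕ)) }

/-- The normal vector `u_l = -((l div t)+1)·t·e₀ + t·e_{l mod t} + e_t`. -/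
noncomputable def normalU (t : ℕ) (l : ℕ) : Fin (t + 1) → ℝ := fun j =>
  (if (j : ℕ) = 0 then -(((l / t + 1) * t : ℕ) : ℝ) else 0)
    + (if (j : ℕ) = l % t then (t : ℝ) else 0)
    + (if (j : ℕ) = t then 1 else 0)

/-- Standard inner product on `ℝ^{t+1}`. -/
noncomputable def sprod {n : ℕ} (u x : Fin n → ℝ) : ℝ := ∑ j, u j * x j

/-!
Write `l = m - 1`, so that `C_m` is spanned by `v_{l+1}, …, v_{l+1+t}`. The key computation is
`⟨u_l, v_{k+1}⟩ = t ⌊(k - l) / t⌋`, which gives `⟨u_l, v_{l+1+j}⟩ = t [j = t]` and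
`⟨u_{l+1}, v_{l+1+j}⟩ = -t [j = 0]` for `0 ≤ j ≤ t`. The first `t` coordinates of `v_{k+1}` are
`1, …, 1, 0, …, 0` with `k mod t + 1` ones, so the consecutive differences `x_k - x_{k+1}`
(with `x_t` read as `0`) pick out the middle generators. Hence `-u_{l+1}/t`, `u_l/t` and the
differences at the `t - 1` indices `k ≢ l (mod t)` form the dual basis of the generators, and
`C_m` is cut out by the positivity of the first dual coordinate and the nonnegativity of the others.
The one consecutive difference missing from this list, at `k ≡ l`, is still nonnegative on `C_m`,
since every generator has a nonincreasing nonnegative prefix.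
-/

open Finset Matrix

theorem Int.sub_ediv (a b t : ℤ) (ht : 0 < t) :
    (a - b) / t = a / t - b / t - if a % t < b % t then 1 else 0 := by
  have ha := Int.emod_add_mul_ediv a t
  have hb := Int.emod_add_mul_ediv b t
  have := Int.emod_nonneg a ht.ne'
  have := Int.emod_nonneg b ht.ne'
  have := Int.emod_lt_of_pos a ht
  have := Int.emod_lt_of_pos b ht
  split_ifs with hlt
  · refine ((Int.ediv_emod_unique (r := a % t - b % t + t) ht).mpr ⟨?_, by omega, by omega⟩).1
    linear_combination ha - hb
  · refine ((Int.ediv_emod_unique (r := a % t - b % t) ht).mpr ⟨?_, by omega, by omega⟩).1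
    linear_combination ha - hb

namespace Matrix

variable {K n : Type*} [CommRing K] [Fintype n] [DecidableEq n] {v w : n → n → K}

theorem dotProduct_sum_smul_of_biorthogonal
    (h : ∀ i j, w i ⬝ᵥ v j = if i = j then 1 else 0) (α : n → K) (i : n) :
    w i ⬝ᵥ ∑ j, α j • v j = α i := by
  simp [dotProduct_sum, dotProduct_smul, h]

theorem sum_dotProduct_smul_of_biorthogonal
    (h : ∀ i j, w i ⬝ᵥ v j = if i = j then 1 else 0) (x : n → K) :
    ∑ i, (w i ⬝ᵥ x) • v i = x := by
  have hwv : of w * (of v)ᵀ = 1 := by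
    ext i j
    simpa [mul_apply, one_apply, dotProduct] using h i j
  calc ∑ i, (w i ⬝ᵥ x) • v i = (of w *ᵥ x) ᵥ* of v := by
        rw [vecMul_eq_sum]; rfl
    _ = ((of v)ᵀ * of w) *ᵥ x := by rw [← mulVec_mulVec, mulVec_transpose]
    _ = x := by rw [mul_eq_one_comm.mp hwv, one_mulVec]

theorem exists_pos_nonneg_sum_smul_iff_of_biorthogonal [PartialOrder K]
    (h : ∀ i j, w i ⬝ᵥ v j = if i = j then 1 else 0) (i₀ : n) (x : n → K) :
    (∃ α : n → K, 0 < α i₀ ∧ (∀ i, 0 ≤ α i) ∧ x = ∑ i, α i • v i) ↔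
      0 < w i₀ ⬝ᵥ x ∧ ∀ i, 0 ≤ w i ⬝ᵥ x := by
  constructor
  · rintro ⟨α, hα₀, hα, rfl⟩
    simp only [dotProduct_sum_smul_of_biorthogonal h]
    exact ⟨hα₀, hα⟩
  · rintro ⟨hx₀, hx⟩
    exact ⟨fun i => w i ⬝ᵥ x, hx₀, hx, (sum_dotProduct_smul_of_biorthogonal h x).symm⟩

end Matrix

namespace ConeDescription

variable {t : ℕ}

theorem sprod_eq_dotProduct {n : ℕ} (u x : Fin n → ℝ) : sprod u x = u ⬝ᵥ x := rfl

theorem normalU_eq_sum_single (ht : 0 < t) (l : ℕ) :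
    normalU t l = (-(((l / t + 1) * t : ℕ) : ℝ)) • Pi.single 0 1
      + (t : ℝ) • Pi.single ⟨l % t, by have := Nat.mod_lt l ht; omega⟩ 1
      + Pi.single (Fin.last t) 1 := by
  funext j
  simp only [normalU, Pi.add_apply, Pi.smul_apply, Pi.single_apply, Fin.ext_iff, Fin.val_zero,
    Fin.val_last, smul_eq_mul]
  split_ifs <;> simp

theorem geneV_apply_of_lt (k : ℕ) (j : Fin (t + 1)) (hj : (j : ℕ) < t) :
    geneV t k j = if (j : ℕ) ≤ (k - 1) % t then 1 else 0 := by
  simp [geneV, hj.ne]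

theorem geneV_apply_last (k : ℕ) : geneV t (k + 1) (Fin.last t) = ((k / t * t : ℕ) : ℝ) := by
  simp [geneV]

theorem sprod_normalU_geneV (ht : 0 < t) (l k : ℕ) :
    sprod (normalU t l) (geneV t (k + 1)) = t * (((k : ℤ) - l) / t : ℤ) := by
  rw [sprod_eq_dotProduct, normalU_eq_sum_single ht]
  simp only [add_dotProduct, smul_dotProduct, single_dotProduct, one_mul, smul_eq_mul]
  rw [geneV_apply_of_lt _ _ (by simpa using ht), geneV_apply_of_lt _ _ (Nat.mod_lt l ht),
    Nat.add_sub_cancel, geneV_apply_last, Int.sub_ediv _ _ _ (by omega)]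
  simp only [Fin.val_zero, zero_le, if_true, ← Int.natCast_div, ← Int.natCast_mod, Nat.cast_lt,
    Int.cast_sub, Int.cast_ite, Int.cast_one, Int.cast_zero, Int.cast_natCast,
    Nat.cast_mul, Nat.cast_add, Nat.cast_one]
  by_cases h : k % t < l % t
  · rw [if_pos h, if_neg (not_le.mpr h)]; ring
  · rw [if_neg h, if_pos (not_lt.mp h)]; ring

theorem sprod_normalU_geneV_add (ht : 0 < t) (l j : ℕ) (hj : j ≤ t) :
    sprod (normalU t l) (geneV t (l + 1 + j)) = if j = t then (t : ℝ) else 0 := by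
  have hdiv : (j : ℤ) / t = if j = t then 1 else 0 := by
    rw [Int.ediv_eq_iff_of_pos (by omega)]
    split_ifs <;> omega
  rw [add_right_comm, sprod_normalU_geneV ht, Nat.cast_add, add_sub_cancel_left, hdiv]
  split_ifs <;> simp

theorem sprod_normalU_succ_geneV_add (ht : 0 < t) (l j : ℕ) (hj : j ≤ t) :
    sprod (normalU t (l + 1)) (geneV t (l + 1 + j)) = if j = 0 then -(t : ℝ) else 0 := by
  have hdiv : ((j : ℤ) - 1) / t = if j = 0 then -1 else 0 := by
    rw [Int.ediv_eq_iff_of_pos (by omega)]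
    split_ifs <;> omega
  rw [add_right_comm, sprod_normalU_geneV ht, Nat.cast_add, Nat.cast_add, Nat.cast_one,
    add_sub_add_left_eq_sub, hdiv]
  split_ifs <;> simp

def prefixCoord (t : ℕ) (x : Fin (t + 1) → ℝ) (k : ℕ) : ℝ :=
  if h : k < t then x ⟨k, by omega⟩ else 0

noncomputable def prefixSingle (t k : ℕ) : Fin (t + 1) → ℝ :=
  if h : k < t then Pi.single ⟨k, by omega⟩ 1 else 0

theorem prefixSingle_dotProduct (k : ℕ) (x : Fin (t + 1) → ℝ) :
    prefixSingle t k ⬝ᵥ x = prefixCoord t x k := by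
  unfold prefixSingle prefixCoord
  split_ifs <;> simp

theorem prefixCoord_geneV (ht : 0 < t) (K k : ℕ) :
    prefixCoord t (geneV t (K + 1)) k = if k ≤ K % t then 1 else 0 := by
  unfold prefixCoord
  split_ifs with hk hle hle
  · rw [geneV_apply_of_lt _ _ hk, Nat.add_sub_cancel, if_pos hle]
  · rw [geneV_apply_of_lt _ _ hk, Nat.add_sub_cancel, if_neg hle]
  · exact absurd (Nat.mod_lt K ht) (by omega)
  · rfl

def prefixCone (t : ℕ) : Set (Fin (t + 1) → ℝ) :=
  { x | (∀ i j : Fin (t + 1), i ≤ j → (j : ℕ) < t → x j ≤ x i) ∧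
    ∀ i : Fin (t + 1), (i : ℕ) < t → 0 ≤ x i }

theorem prefixCoord_succ_le {x : Fin (t + 1) → ℝ} (hx : x ∈ prefixCone t) (k : ℕ) :
    prefixCoord t x (k + 1) ≤ prefixCoord t x k := by
  unfold prefixCoord
  split_ifs with h₁ h₀ h₀
  · exact hx.1 _ _ (Fin.mk_le_mk.mpr k.le_succ) h₁
  · omega
  · exact hx.2 _ h₀
  · rfl

theorem geneV_mem_prefixCone (k : ℕ) : geneV t k ∈ prefixCone t := by
  refine ⟨fun i j hij hj => ?_, fun i hi => ?_⟩
  · rw [geneV_apply_of_lt k j hj, geneV_apply_of_lt k i (lt_of_le_of_lt hij hj)]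
    have hij : (i : ℕ) ≤ j := hij
    split_ifs <;> first | (exfalso; omega) | norm_num
  · rw [geneV_apply_of_lt k i hi]
    split_ifs <;> norm_num

theorem sum_smul_mem_prefixCone {ι : Type*} [Fintype ι] {α : ι → ℝ} {v : ι → Fin (t + 1) → ℝ}
    (hα : ∀ i, 0 ≤ α i) (hv : ∀ i, v i ∈ prefixCone t) : ∑ i, α i • v i ∈ prefixCone t := by
  simp only [prefixCone, Set.mem_ofPred_eq, Finset.sum_apply, Pi.smul_apply, smul_eq_mul]
  exact ⟨fun i j hij hj => sum_le_sum fun k _ =>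
      mul_le_mul_of_nonneg_left ((hv k).1 i j hij hj) (hα k),
    fun i hi => sum_nonneg fun k _ => mul_nonneg (hα k) ((hv k).2 i hi)⟩

/-- The basis dual to the generators `v_{l+1}, …, v_{l+1+t}` of `C_{l+1}`. -/
noncomputable def dualV (t l : ℕ) (i : Fin (t + 1)) : Fin (t + 1) → ℝ :=
  if (i : ℕ) = 0 then -(t : ℝ)⁻¹ • normalU t (l + 1)
  else if (i : ℕ) = t then (t : ℝ)⁻¹ • normalU t l
  else prefixSingle t ((l + i) % t) - prefixSingle t ((l + i) % t + 1)

theorem add_mod_eq_add_mod_iff {l i j : ℕ} (hi₀ : 0 < i) (hit : i < t) (hjt : j ≤ t) :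
    (l + i) % t = (l + j) % t ↔ i = j := by
  refine ⟨fun h => ?_, fun h => h ▸ rfl⟩
  have hij : i % t = j % t := Nat.ModEq.add_left_cancel' l h
  rcases hjt.lt_or_eq with hjt | rfl
  · rwa [Nat.mod_eq_of_lt hit, Nat.mod_eq_of_lt hjt] at hij
  · rw [Nat.mod_eq_of_lt hit, Nat.mod_self] at hij
    omega

theorem dualV_dotProduct_geneV (ht : 0 < t) (l : ℕ) (i j : Fin (t + 1)) :
    dualV t l i ⬝ᵥ geneV t (l + 1 + j) = if i = j then 1 else 0 := by
  have hj : (j : ℕ) ≤ t := Nat.lt_succ_iff.mp j.isLt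
  have ht' : (t : ℝ) ≠ 0 := by positivity
  simp only [Fin.ext_iff, dualV]
  rcases (by omega : (i : ℕ) = 0 ∨ (i : ℕ) = t ∨ (0 < (i : ℕ) ∧ (i : ℕ) < t))
    with hi | hi | ⟨hi₀, hit⟩
  · rw [if_pos hi, neg_smul, neg_dotProduct, smul_dotProduct, ← sprod_eq_dotProduct,
      sprod_normalU_succ_geneV_add ht l j hj, hi, smul_eq_mul]
    split_ifs <;> first | (exfalso; omega) | simp [ht']
  · rw [if_neg (by omega), if_pos hi, smul_dotProduct, ← sprod_eq_dotProduct,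
      sprod_normalU_geneV_add ht l j hj, hi, smul_eq_mul]
    split_ifs <;> first | (exfalso; omega) | simp [ht']
  · rw [if_neg (by omega), if_neg (by omega), sub_dotProduct, prefixSingle_dotProduct,
      prefixSingle_dotProduct, add_right_comm, prefixCoord_geneV ht, prefixCoord_geneV ht]
    have hiff := add_mod_eq_add_mod_iff (l := l) hi₀ hit hj
    generalize (l + i) % t = a, (l + j) % t = b at hiff ⊢
    simp only [← hiff]
    split_ifs <;> first | (exfalso; omega) | norm_num

theorem dualV_zero_dotProduct_pos_iff (ht : 0 < t) (l : ℕ) (x : Fin (t + 1) → ℝ) :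
    0 < dualV t l 0 ⬝ᵥ x ↔ sprod (normalU t (l + 1)) x < 0 := by
  rw [dualV, Fin.val_zero, if_pos rfl, neg_smul, neg_dotProduct, smul_dotProduct, smul_eq_mul,
    ← mul_neg, mul_pos_iff_of_pos_left (by positivity), neg_pos, sprod_eq_dotProduct]

theorem dualV_last_dotProduct_nonneg_iff (ht : 0 < t) (l : ℕ) (x : Fin (t + 1) → ℝ) :
    0 ≤ dualV t l (Fin.last t) ⬝ᵥ x ↔ 0 ≤ sprod (normalU t l) x := by
  rw [dualV, Fin.val_last, if_neg ht.ne', if_pos rfl, smul_dotProduct, smul_eq_mul,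
    mul_nonneg_iff_of_pos_left (by positivity), sprod_eq_dotProduct]

theorem dualV_dotProduct_nonneg {l : ℕ} {x : Fin (t + 1) → ℝ} (hx : x ∈ prefixCone t)
    {i : Fin (t + 1)} (hi₀ : i ≠ 0) (hit : i ≠ Fin.last t) : 0 ≤ dualV t l i ⬝ᵥ x := by
  rw [dualV, if_neg fun h : (i : ℕ) = 0 => hi₀ (Fin.ext h),
    if_neg fun h : (i : ℕ) = t => hit (Fin.ext h), sub_dotProduct,
    prefixSingle_dotProduct, prefixSingle_dotProduct, sub_nonneg]
  exact prefixCoord_succ_le hx _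

end ConeDescription

open ConeDescription

/-- Inequality description of `C_m`:
`C_m = {x : x₀ ≥ x₁ ≥ … ≥ x_{t-1} ≥ 0, ⟨u_{m-1},x⟩ ≥ 0, ⟨u_m,x⟩ < 0}`. -/
theorem cone_inequality_description (t : ℕ) (ht : 1 ≤ t) (m : ℕ) (hm : 1 ≤ m) :
    coneC t m
      = { x : Fin (t + 1) → ℝ |
          (∀ i j : Fin (t + 1), i ≤ j → (j : ℕ) < t → x j ≤ x i) ∧
          (∀ i : Fin (t + 1), (i : ℕ) < t → 0 ≤ x i) ∧
          0 ≤ sprod (normalU t (m - 1)) x ∧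
          sprod (normalU t m) x < 0 } := by
  obtain ⟨l, rfl⟩ : ∃ l, m = l + 1 := ⟨m - 1, by omega⟩
  have hbiorth := dualV_dotProduct_geneV ht l
  ext x
  rw [Nat.add_sub_cancel, Set.mem_ofPred_eq, ← and_assoc]
  change (∃ α : Fin (t + 1) → ℝ, 0 < α 0 ∧ (∀ i, 0 ≤ α i) ∧ x = ∑ i, α i • geneV t (l + 1 + i))
    ↔ x ∈ prefixCone t ∧ _
  rw [Matrix.exists_pos_nonneg_sum_smul_iff_of_biorthogonal hbiorth]
  constructor
  · rintro ⟨hx₀, hx⟩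
    refine ⟨?_, (dualV_last_dotProduct_nonneg_iff ht l x).mp (hx _),
      (dualV_zero_dotProduct_pos_iff ht l x).mp hx₀⟩
    rw [← Matrix.sum_dotProduct_smul_of_biorthogonal hbiorth x]
    exact sum_smul_mem_prefixCone hx fun _ => geneV_mem_prefixCone _
  · rintro ⟨hx, hl, hl₁⟩
    have hx₀ := (dualV_zero_dotProduct_pos_iff ht l x).mpr hl₁
    refine ⟨hx₀, fun i => ?_⟩
    rcases eq_or_ne i 0 with rfl | hi₀
    · exact hx₀.le
    rcases eq_or_ne i (Fin.last t) with rfl | hit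
    · exact (dualV_last_dotProduct_nonneg_iff ht l x).mpr hl
    · exact dualV_dotProduct_nonneg hx hi₀ hit
end

section
/- Fix an integer t ≥ 1. For every integer m ≥ 1, C_m = { x ∈ ℝ^{t+1} : x_0 ≥ x_1 ≥ … ≥ x_{t−1} ≥ 0, ⟨u_l, x⟩ ≥ 0 for all 0 ≤ l ≤ m−1, and ⟨u_l, x⟩ < 0 for all l ≥ m }; that is, the half-open cone C_m is also cut out by this infinite system of linear inequalities. -/
/-!
Write `B_l(x) = ⟨u_l, x⟩`. A direct computation gives `⟨u_l, v_{i+1}⟩ = t ⌊(i - l) / t⌋`,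
which is `≥ 0` for `l ≤ i`, `≤ -t` for `l > i` and `≤ 0` for `l > i - t`. Together with the
shape of the `v_i` this shows that every point of `C_m` satisfies the inequalities.

Conversely let `m = n + 1`. The `t + 1` consecutive normals `u_n, …, u_{n+t}` determine `x`, and
on this window the pairing above only takes the values `0, ±t`; hence `x = ∑ α_k v_{m+k}` with
`t α_0 = -B_{n+1}`, `t α_k = B_{n+k} - B_{n+k+1}` for `0 < k < t` and `t α_t = B_n`. These
coefficients have the required signs because `l ↦ B_l(x)` is antitone as soon as
`x_0 ≥ … ≥ x_{t-1} ≥ 0`, and `B_n ≥ 0 > B_{n+1}`.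
-/

section

variable {t : ℕ}

lemma sprod_eq_dotProduct {n : ℕ} (u x : Fin n → ℝ) : sprod u x = u ⬝ᵥ x := rfl

lemma sprod_normalU_of_eq_mul_add {l q r : ℕ} (hr : r < t) (hl : l = t * q + r)
    (x : Fin (t + 1) → ℝ) :
    sprod (normalU t l) x
      = -((q + 1) * t : ℝ) * x 0 + t * x (Fin.castSucc ⟨r, hr⟩) + x (Fin.last t) := by
  have ht : 0 < t := by omega
  have h0 : ∀ j : Fin (t + 1), ((j : ℕ) = 0 ↔ j = 0) := fun j => by
    simp only [Fin.ext_iff, Fin.val_zero]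
  have hr' : ∀ j : Fin (t + 1), ((j : ℕ) = r ↔ j = Fin.castSucc ⟨r, hr⟩) := fun j => by
    simp only [Fin.ext_iff, Fin.val_castSucc]
  have hlast : ∀ j : Fin (t + 1), ((j : ℕ) = t ↔ j = Fin.last t) := fun j => by
    simp only [Fin.ext_iff, Fin.val_last]
  subst hl
  simp only [sprod, normalU, Nat.mul_add_div ht, Nat.mul_add_mod, Nat.div_eq_of_lt hr,
    Nat.mod_eq_of_lt hr, add_zero, h0, hr', hlast, add_mul, Finset.sum_add_distrib, ite_mul,
    zero_mul, Finset.sum_ite_eq', Finset.mem_univ, if_true]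
  push_cast; ring

lemma geneV_of_lt (i : ℕ) (k : Fin (t + 1)) (hk : (k : ℕ) < t) :
    geneV t i k = if (k : ℕ) ≤ (i - 1) % t then 1 else 0 := by
  simp [geneV, hk.ne]

lemma geneV_antitone (i : ℕ) {a b : Fin (t + 1)} (hab : a ≤ b) (hb : (b : ℕ) < t) :
    geneV t i b ≤ geneV t i a := by
  have ha : (a : ℕ) < t := lt_of_le_of_lt hab hb
  rw [geneV_of_lt i a ha, geneV_of_lt i b hb]
  have : (a : ℕ) ≤ b := hab
  split_ifs <;> first | omega | norm_num

lemma geneV_nonneg (i : ℕ) (a : Fin (t + 1)) (ha : (a : ℕ) < t) : 0 ≤ geneV t i a := by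
  rw [geneV_of_lt i a ha]
  split_ifs <;> norm_num

lemma sprod_normalU_geneV (ht : 0 < t) (l i : ℕ) :
    sprod (normalU t l) (geneV t (i + 1)) = t * (((i : ℤ) - l) / t : ℤ) := by
  have hti : (0 : ℤ) < t := by exact_mod_cast ht
  obtain ⟨qi, ri, hri, rfl⟩ : ∃ q r, r < t ∧ i = t * q + r :=
    ⟨i / t, i % t, Nat.mod_lt i ht, (Nat.div_add_mod i t).symm⟩
  obtain ⟨ql, rl, hrl, rfl⟩ : ∃ q r, r < t ∧ l = t * q + r :=
    ⟨l / t, l % t, Nat.mod_lt l ht, (Nat.div_add_mod l t).symm⟩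
  rw [sprod_normalU_of_eq_mul_add hrl rfl, geneV_of_lt _ _ (by simpa using ht),
    geneV_of_lt _ _ (by simpa using hrl)]
  simp only [geneV, Fin.val_last, if_true, Fin.val_castSucc, Fin.val_zero, zero_le,
    Nat.add_sub_cancel, Nat.mul_add_div ht, Nat.mul_add_mod, Nat.div_eq_of_lt hri,
    Nat.mod_eq_of_lt hri, add_zero]
  split_ifs with h
  · rw [(Int.ediv_eq_iff_of_pos (y := (qi : ℤ) - (ql : ℤ)) hti).2
      ⟨by push_cast; linarith, by push_cast; linarith⟩]
    push_cast; ring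
  · rw [(Int.ediv_eq_iff_of_pos (y := (qi : ℤ) - (ql : ℤ) - 1) hti).2
      ⟨by push_cast; linarith, by push_cast; linarith⟩]
    push_cast; ring

lemma sprod_normalU_geneV_eq (ht : 0 < t) {l i : ℕ} (q : ℤ) (h₁ : q * t ≤ (i : ℤ) - l)
    (h₂ : (i : ℤ) - l < q * t + t) : sprod (normalU t l) (geneV t (i + 1)) = t * q := by
  rw [sprod_normalU_geneV ht, (Int.ediv_eq_iff_of_pos (by exact_mod_cast ht)).2 ⟨h₁, h₂⟩]

lemma sprod_normalU_geneV_nonneg (ht : 0 < t) {l i : ℕ} (h : l ≤ i) :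
    0 ≤ sprod (normalU t l) (geneV t (i + 1)) := by
  rw [sprod_normalU_geneV ht]
  have : (0 : ℤ) ≤ ((i : ℤ) - l) / t := Int.ediv_nonneg (by omega) (by omega)
  positivity

lemma sprod_normalU_geneV_le_neg (ht : 0 < t) {l i : ℕ} (h : i < l) :
    sprod (normalU t l) (geneV t (i + 1)) ≤ -t := by
  rw [sprod_normalU_geneV ht]
  have : ((i : ℤ) - l) / t ≤ -1 := by
    have := (Int.ediv_lt_iff_lt_mul (a := (i : ℤ) - l) (b := 0) (c := t) (by omega)).2 (by omega)
    omega
  have : (((((i : ℤ) - l) / t : ℤ)) : ℝ) ≤ -1 := by exact_mod_cast this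
  nlinarith

lemma sprod_normalU_geneV_nonpos (ht : 0 < t) {l i : ℕ} (h : i < l + t) :
    sprod (normalU t l) (geneV t (i + 1)) ≤ 0 := by
  rw [sprod_normalU_geneV ht]
  have : ((i : ℤ) - l) / t ≤ 0 := by
    have := (Int.ediv_lt_iff_lt_mul (a := (i : ℤ) - l) (b := 1) (c := t) (by omega)).2 (by omega)
    omega
  have : (((((i : ℤ) - l) / t : ℤ)) : ℝ) ≤ 0 := by exact_mod_cast this
  nlinarith

lemma sprod_sum_smul {n : ℕ} {ι : Type*} [Fintype ι] (u : Fin n → ℝ) (α : ι → ℝ)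
    (w : ι → Fin n → ℝ) : sprod u (∑ i, α i • w i) = ∑ i, α i * sprod u (w i) := by
  simp only [sprod_eq_dotProduct, dotProduct_sum, dotProduct_smul, smul_eq_mul]

section coneC

variable {m : ℕ} {x : Fin (t + 1) → ℝ}

lemma coord_antitone_of_mem_coneC (hx : x ∈ coneC t m) {a b : Fin (t + 1)} (hab : a ≤ b)
    (hb : (b : ℕ) < t) : x b ≤ x a := by
  obtain ⟨α, -, hα, rfl⟩ := hx
  simp only [Finset.sum_apply, Pi.smul_apply, smul_eq_mul]
  exact Finset.sum_le_sum fun i _ => mul_le_mul_of_nonneg_left (geneV_antitone _ hab hb) (hα i)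

lemma coord_nonneg_of_mem_coneC (hx : x ∈ coneC t m) {a : Fin (t + 1)} (ha : (a : ℕ) < t) :
    0 ≤ x a := by
  obtain ⟨α, -, hα, rfl⟩ := hx
  simp only [Finset.sum_apply, Pi.smul_apply, smul_eq_mul]
  exact Finset.sum_nonneg fun i _ => mul_nonneg (hα i) (geneV_nonneg _ a ha)

lemma sprod_normalU_nonneg_of_mem_coneC (ht : 0 < t) {n l : ℕ} (hx : x ∈ coneC t (n + 1))
    (hl : l ≤ n) : 0 ≤ sprod (normalU t l) x := by
  obtain ⟨α, -, hα, rfl⟩ := hx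
  rw [sprod_sum_smul]
  refine Finset.sum_nonneg fun k _ => mul_nonneg (hα k) ?_
  rw [Nat.add_right_comm]
  exact sprod_normalU_geneV_nonneg ht (by omega)

lemma sprod_normalU_neg_of_mem_coneC (ht : 0 < t) {n l : ℕ} (hx : x ∈ coneC t (n + 1))
    (hl : n < l) : sprod (normalU t l) x < 0 := by
  obtain ⟨α, hα₀, hα, rfl⟩ := hx
  rw [sprod_sum_smul, Fin.sum_univ_succ]
  have hfirst : α 0 * sprod (normalU t l) (geneV t (n + 1 + ((0 : Fin (t + 1)) : ℕ))) < 0 :=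
    mul_neg_of_pos_of_neg hα₀ ((sprod_normalU_geneV_le_neg ht hl).trans_lt (by simpa using ht))
  have hrest : ∑ k : Fin t, α k.succ
      * sprod (normalU t l) (geneV t (n + 1 + (k.succ : ℕ))) ≤ 0 := by
    refine Finset.sum_nonpos fun k _ => mul_nonpos_of_nonneg_of_nonpos (hα _) ?_
    rw [Nat.add_right_comm]
    exact sprod_normalU_geneV_nonpos ht (by rw [Fin.val_succ]; omega)
  linarith

end coneC

lemma exists_add_eq_mul_add (ht : 0 < t) (n : ℕ) {s : ℕ} (hs : s < t) :
    ∃ j < t, ∃ q, n + j = t * q + s := by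
  obtain ⟨q, r, hr, rfl⟩ : ∃ q r, r < t ∧ n = t * q + r :=
    ⟨n / t, n % t, Nat.mod_lt n ht, (Nat.div_add_mod n t).symm⟩
  rcases le_or_gt r s with h | h
  · exact ⟨s - r, by omega, q, by omega⟩
  · exact ⟨t + s - r, by omega, q + 1, by rw [mul_add]; omega⟩

lemma eq_of_sprod_normalU_eq (ht : 0 < t) (n : ℕ) {x y : Fin (t + 1) → ℝ}
    (h : ∀ j ≤ t, sprod (normalU t (n + j)) x = sprod (normalU t (n + j)) y) : x = y := by
  set z := x - y
  have hz : ∀ j ≤ t, sprod (normalU t (n + j)) z = 0 := fun j hj => by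
    rw [sprod_eq_dotProduct, dotProduct_sub, ← sprod_eq_dotProduct, ← sprod_eq_dotProduct,
      h j hj, sub_self]
  have htR : (t : ℝ) ≠ 0 := by positivity
  obtain ⟨q, r, hr, hn⟩ : ∃ q r, r < t ∧ n = t * q + r :=
    ⟨n / t, n % t, Nat.mod_lt n ht, (Nat.div_add_mod n t).symm⟩
  -- `u_{n+t} - u_n = -t e₀`
  have hz₀ : z 0 = 0 := by
    have h₁ := hz 0 (Nat.zero_le t)
    have h₂ := hz t le_rfl
    rw [sprod_normalU_of_eq_mul_add hr (by omega)] at h₁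
    rw [sprod_normalU_of_eq_mul_add hr (q := q + 1) (by rw [hn]; ring)] at h₂
    have : (t : ℝ) * z 0 = 0 := by push_cast at h₂; linear_combination h₁ - h₂
    simpa [htR] using this
  have hres : ∀ s (hs : s < t), t * z (Fin.castSucc ⟨s, hs⟩) + z (Fin.last t) = 0 := by
    intro s hs
    obtain ⟨j, hj, q', hq'⟩ := exists_add_eq_mul_add ht n hs
    have := hz j hj.le
    rwa [sprod_normalU_of_eq_mul_add hs hq', hz₀, mul_zero, zero_add] at this
  have hlast : z (Fin.last t) = 0 := by
    simpa [hz₀] using hres 0 ht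
  rw [← sub_eq_zero]
  change z = 0
  funext k
  induction k using Fin.lastCases with
  | last => exact hlast
  | cast k => simpa [hlast, htR] using hres k k.isLt

section inequalities

variable {x : Fin (t + 1) → ℝ}

lemma sprod_normalU_succ_le (hmono : ∀ i j : Fin (t + 1), i ≤ j → (j : ℕ) < t → x j ≤ x i)
    (hpos : ∀ i : Fin (t + 1), (i : ℕ) < t → 0 ≤ x i) (l : ℕ) :
    sprod (normalU t (l + 1)) x ≤ sprod (normalU t l) x := by
  rcases Nat.eq_zero_or_pos t with rfl | ht
  · simp [sprod, normalU]
  obtain ⟨q, r, hr, rfl⟩ : ∃ q r, r < t ∧ l = t * q + r :=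
    ⟨l / t, l % t, Nat.mod_lt l ht, (Nat.div_add_mod l t).symm⟩
  have htR : (0 : ℝ) ≤ t := by positivity
  rw [sprod_normalU_of_eq_mul_add hr rfl]
  rcases Nat.lt_or_ge (r + 1) t with hr' | hr'
  · rw [sprod_normalU_of_eq_mul_add (q := q) hr' (by ring)]
    have := hmono _ _ (show Fin.castSucc ⟨r, hr⟩ ≤ Fin.castSucc ⟨r + 1, hr'⟩ by
      simp [Fin.le_def]) (by simpa using hr')
    nlinarith
  · -- wrapping around: `u_{l+1} - u_l = -t e_r`
    rw [sprod_normalU_of_eq_mul_add ht (q := q + 1) (by rw [mul_add]; omega)]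
    have h0 : (Fin.castSucc ⟨0, ht⟩ : Fin (t + 1)) = 0 := rfl
    have := hpos (Fin.castSucc ⟨r, hr⟩) (by simpa using hr)
    rw [h0]
    push_cast
    nlinarith

end inequalities

/-- The coordinates of `x` in the basis `v_{n+1}, …, v_{n+t+1}`: the dual basis consists of
`-u_{n+1} / t`, the differences `(u_{n+k} - u_{n+k+1}) / t` for `0 < k < t`, and `u_n / t`. -/
noncomputable def coneCoeff (t n : ℕ) (x : Fin (t + 1) → ℝ) (k : ℕ) : ℝ :=
  if k = t then sprod (normalU t n) x / t
  else ((if k = 0 then 0 else sprod (normalU t (n + k)) x) - sprod (normalU t (n + k + 1)) x) / t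

section coneCoeff

variable {n : ℕ} {x : Fin (t + 1) → ℝ}

lemma coneCoeff_zero_pos (ht : 0 < t) (h : sprod (normalU t (n + 1)) x < 0) :
    0 < coneCoeff t n x 0 := by
  simp only [coneCoeff, ht.ne, if_false, if_true, zero_sub]
  exact div_pos (by linarith) (by exact_mod_cast ht)

lemma coneCoeff_nonneg (hmono : ∀ i j : Fin (t + 1), i ≤ j → (j : ℕ) < t → x j ≤ x i)
    (hpos : ∀ i : Fin (t + 1), (i : ℕ) < t → 0 ≤ x i) (hn : 0 ≤ sprod (normalU t n) x)
    (hn' : sprod (normalU t (n + 1)) x ≤ 0) (k : ℕ) : 0 ≤ coneCoeff t n x k := by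
  unfold coneCoeff
  split_ifs with hkt hk
  · positivity
  · subst hk
    exact div_nonneg (by linarith) t.cast_nonneg
  · exact div_nonneg (sub_nonneg.2 (sprod_normalU_succ_le hmono hpos _)) t.cast_nonneg

lemma sum_range_coneCoeff (ht : 0 < t) {j : ℕ} (hj₁ : 1 ≤ j) (hj : j ≤ t) :
    t * ∑ k ∈ Finset.range j, coneCoeff t n x k = -sprod (normalU t (n + j)) x := by
  set c : ℕ → ℝ := fun k => if k = 0 then 0 else sprod (normalU t (n + k)) x
  have hterm : ∀ k ∈ Finset.range j, t * coneCoeff t n x k = c k - c (k + 1) := by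
    intro k hk
    have hkt : k ≠ t := by have := Finset.mem_range.1 hk; omega
    simp only [coneCoeff, if_neg hkt, c, if_neg k.succ_ne_zero, ← add_assoc]
    field_simp
  rw [Finset.mul_sum, Finset.sum_congr rfl hterm, Finset.sum_range_sub']
  simp only [c, if_pos rfl, if_neg (by omega : j ≠ 0)]
  ring

lemma sprod_normalU_sum_coneCoeff (ht : 0 < t) {j : ℕ} (hj : j ≤ t) :
    sprod (normalU t (n + j)) (∑ k : Fin (t + 1), coneCoeff t n x k • geneV t (n + 1 + k))
      = sprod (normalU t (n + j)) x := by
  have htR : (t : ℝ) ≠ 0 := by positivity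
  rw [sprod_sum_smul, Fin.sum_univ_eq_sum_range
    (fun k => coneCoeff t n x k * sprod (normalU t (n + j)) (geneV t (n + 1 + k)))]
  simp only [Nat.add_right_comm n 1]
  rcases Nat.eq_zero_or_pos j with rfl | hj₁
  · rw [Finset.sum_range_succ, Finset.sum_eq_zero fun k hk => by
      have := Finset.mem_range.1 hk
      rw [sprod_normalU_geneV_eq ht 0 (by push_cast; omega) (by push_cast; omega), Int.cast_zero,
        mul_zero, mul_zero]]
    rw [sprod_normalU_geneV_eq ht 1 (by push_cast; omega) (by push_cast; omega), coneCoeff,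
      if_pos rfl]
    simp only [add_zero, Int.cast_one, mul_one, zero_add]
    field_simp
  · have hlow : ∀ k ∈ Finset.range j, sprod (normalU t (n + j)) (geneV t (n + k + 1)) = -t :=
      fun k hk => by
        have := Finset.mem_range.1 hk
        rw [sprod_normalU_geneV_eq ht (-1) (by push_cast; omega) (by push_cast; omega)]
        simp
    have hhigh : ∀ k ∈ Finset.Ico j (t + 1),
        sprod (normalU t (n + j)) (geneV t (n + k + 1)) = 0 := fun k hk => by
      have := Finset.mem_Ico.1 hk
      rw [sprod_normalU_geneV_eq ht 0 (by push_cast; omega) (by push_cast; omega)]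
      simp
    rw [← Finset.sum_range_add_sum_Ico _ (by omega : j ≤ t + 1),
      Finset.sum_congr rfl fun k hk => by rw [hlow k hk],
      Finset.sum_eq_zero (s := Finset.Ico j (t + 1)) fun k hk => by rw [hhigh k hk, mul_zero],
      add_zero, ← Finset.sum_mul]
    linear_combination -(sum_range_coneCoeff (x := x) ht hj₁ hj)

end coneCoeff

lemma mem_coneC_of_sprod_normalU (ht : 0 < t) {n : ℕ} {x : Fin (t + 1) → ℝ}
    (hmono : ∀ i j : Fin (t + 1), i ≤ j → (j : ℕ) < t → x j ≤ x i)
    (hpos : ∀ i : Fin (t + 1), (i : ℕ) < t → 0 ≤ x i) (hn : 0 ≤ sprod (normalU t n) x)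
    (hn' : sprod (normalU t (n + 1)) x < 0) : x ∈ coneC t (n + 1) :=
  ⟨fun k => coneCoeff t n x k, coneCoeff_zero_pos ht hn',
    fun k => coneCoeff_nonneg hmono hpos hn hn'.le k,
    eq_of_sprod_normalU_eq ht n fun _ hj => (sprod_normalU_sum_coneCoeff ht hj).symm⟩

end

/-- `C_m` is also cut out by the infinite system of inequalities
`x₀ ≥ … ≥ x_{t-1} ≥ 0`, `⟨u_l,x⟩ ≥ 0` for `0 ≤ l ≤ m-1` and `⟨u_l,x⟩ < 0` for `l ≥ m`. -/
theorem cone_infinite_inequality_description (t : ℕ) (ht : 1 ≤ t) (m : ℕ) (hm : 1 ≤ m) :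
    coneC t m
      = { x : Fin (t + 1) → ℝ |
          (∀ i j : Fin (t + 1), i ≤ j → (j : ℕ) < t → x j ≤ x i) ∧
          (∀ i : Fin (t + 1), (i : ℕ) < t → 0 ≤ x i) ∧
          (∀ l : ℕ, l < m → 0 ≤ sprod (normalU t l) x) ∧
          (∀ l : ℕ, m ≤ l → sprod (normalU t l) x < 0) } := by
  obtain ⟨n, rfl⟩ : ∃ n, m = n + 1 := ⟨m - 1, by omega⟩
  ext x
  constructor
  · intro hx
    exact ⟨fun _ _ hij hj => coord_antitone_of_mem_coneC hx hij hj,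
      fun _ hi => coord_nonneg_of_mem_coneC hx hi,
      fun _ hl => sprod_normalU_nonneg_of_mem_coneC ht hx (Nat.le_of_lt_succ hl),
      fun _ hl => sprod_normalU_neg_of_mem_coneC ht hx hl⟩
  · rintro ⟨hmono, hpos, hge, hlt⟩
    exact mem_coneC_of_sprod_normalU ht hmono hpos (hge n n.lt_succ_self) (hlt (n + 1) le_rfl)
end

section
/- Fix an integer t ≥ 1. Then ⋃_{m≥1} C_m = { x ∈ ℝ^{t+1} : x_0 ≥ x_1 ≥ … ≥ x_{t−1} ≥ 0 and x_t ≥ 0 } \ { x ∈ ℝ^{t+1} : x_0 = x_1 = … = x_{t−1} = 0 and x_t ≥ 0 }; that is, the half-open cones C_m tile the simplicial cone { x : x_0 ≥ … ≥ x_{t−1} ≥ 0, x_t ≥ 0 } with the extreme ray along the last coordinate axis removed. -/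
/-!
Writing `i - 1 = q t + r` with `r < t`, the generator `v_i` is the staircase `e_0 + ⋯ + e_r`
lifted to height `q t`, so `v_{i+t} = v_i + t e_t`. A point `x` of the closed cone is
`∑_{r<t} d_r v_{r+1} + x_t e_t` with `d_r = x_r - x_{r+1} ≥ 0` (reading `x_t` as `0` here).
Extend `d` `t`-periodically and let `g k = d_0 + ⋯ + d_{k-1}`; then `g 0 = 0` and
`g (k + t) = g k + x_0`, so if `x_0 > 0` there is a `k` with `g k ≤ x_t / t < g (k + 1)`.
With `c = x_t / t - g k ∈ [0, d_k)`, the coefficients `d_k - c, d_{k+1}, …, d_{k+t-1}, c`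
express `x` in `v_{k+1}, …, v_{k+1+t}`: moving the window `k, …, k+t-1` one step to the right
adds `d_k (v_{k+1+t} - v_{k+1}) = t d_k e_t`, so
`∑_{i<t} d_{k+i} v_{k+1+i} = ∑_{i<t} d_i v_{i+1} + t g(k) e_t`.
Conversely, the coordinate `x_0` of a point of `C_m` is the sum of its coefficients, hence positive.
-/

open Finset

theorem exists_le_lt_succ {α : Type*} [LinearOrder α] {f : ℕ → α} {y : α} (h0 : f 0 ≤ y)
    {n : ℕ} (hn : y < f n) : ∃ k, f k ≤ y ∧ y < f (k + 1) := by
  induction n with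
  | zero => exact absurd h0 hn.not_ge
  | succ n ih => exact (le_or_gt (f n) y).elim (fun h => ⟨n, h, hn⟩) ih

theorem Function.Periodic.sum_range_mul {M : Type*} [AddCommMonoid M] {δ : ℕ → M} {t : ℕ}
    (hδ : Function.Periodic δ t) (q : ℕ) :
    ∑ i ∈ range (q * t), δ i = q • ∑ i ∈ range t, δ i := by
  induction q with
  | zero => simp
  | succ q ih =>
    rw [Nat.succ_mul, sum_range_add, ih, succ_nsmul]
    congr 1
    refine sum_congr rfl fun i _ => ?_
    simpa [add_comm] using hδ.nat_mul q i

theorem sum_range_smul_shift {R M : Type*} [Semiring R] [AddCommGroup M] [Module R M]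
    {t : ℕ} {δ : ℕ → R} {V : ℕ → M} {w : M} (hδ : Function.Periodic δ t)
    (hV : ∀ n, V (n + t) = V n + w) (k : ℕ) :
    ∑ i ∈ range t, δ (k + i) • V (k + i) =
      ∑ i ∈ range t, δ i • V i + (∑ i ∈ range k, δ i) • w := by
  induction k with
  | zero => simp
  | succ k ih =>
    have h := (sum_range_succ' (fun i => δ (k + i) • V (k + i)) t).symm
    rw [sum_range_succ, hδ k, hV k, ih, add_zero] at h
    simp only [add_right_comm k 1, ← add_assoc k] at h ⊢
    rw [eq_sub_of_add_eq h, sum_range_succ, add_smul, smul_add]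
    abel

section Staircase

variable {t : ℕ}

theorem geneV_apply_of_lt (n : ℕ) {j : Fin (t + 1)} (hj : (j : ℕ) < t) :
    geneV t n j = if (j : ℕ) ≤ (n - 1) % t then 1 else 0 := by
  simp [geneV, hj.ne]

theorem geneV_apply_last (n : ℕ) : geneV t n (Fin.last t) = (((n - 1) / t * t : ℕ) : ℝ) := by
  simp [geneV]

theorem geneV_nonneg_s10 (n : ℕ) (j : Fin (t + 1)) : 0 ≤ geneV t n j := by
  unfold geneV
  split_ifs <;> positivity

theorem geneV_anti (n : ℕ) {i j : Fin (t + 1)} (hij : i ≤ j) (hj : (j : ℕ) < t) :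
    geneV t n j ≤ geneV t n i := by
  rw [geneV_apply_of_lt n hj, geneV_apply_of_lt n (lt_of_le_of_lt hij hj)]
  have : (i : ℕ) ≤ j := hij
  split_ifs <;> norm_num
  omega

theorem geneV_apply_zero (ht : 0 < t) (n : ℕ) : geneV t n 0 = 1 := by
  simp [geneV_apply_of_lt n (j := 0) (by simpa using ht)]

theorem geneV_add_period (ht : 0 < t) (n : ℕ) :
    geneV t (n + t + 1) = geneV t (n + 1) + Pi.single (Fin.last t) (t : ℝ) := by
  ext j
  rcases Fin.eq_castSucc_or_eq_last j with ⟨j, rfl⟩ | rfl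
  · simp [geneV_apply_of_lt _ (j := j.castSucc) (by simp)]
  · simp [geneV_apply_last, Nat.add_div_right _ ht, add_mul]

noncomputable def coordSeq (x : Fin (t + 1) → ℝ) (s : ℕ) : ℝ :=
  if h : s < t then x ⟨s, by omega⟩ else 0

noncomputable def coordDrop (x : Fin (t + 1) → ℝ) (n : ℕ) : ℝ :=
  coordSeq x (n % t) - coordSeq x (n % t + 1)

theorem coordDrop_periodic (x : Fin (t + 1) → ℝ) : Function.Periodic (coordDrop x) t := by
  intro n
  simp [coordDrop]

theorem coordDrop_of_lt (x : Fin (t + 1) → ℝ) {n : ℕ} (hn : n < t) :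
    coordDrop x n = coordSeq x n - coordSeq x (n + 1) := by
  rw [coordDrop, Nat.mod_eq_of_lt hn]

theorem sum_Ico_coordDrop (x : Fin (t + 1) → ℝ) {j : ℕ} (hj : j ≤ t) :
    ∑ n ∈ Ico j t, coordDrop x n = coordSeq x j := by
  have h := sum_Ico_sub (fun s => -coordSeq x s) hj
  simp only [neg_sub_neg] at h
  rw [sum_congr rfl fun n hn => coordDrop_of_lt x (mem_Ico.1 hn).2, h]
  simp [coordSeq]

theorem sum_range_coordDrop_smul_geneV (x : Fin (t + 1) → ℝ) :
    ∑ n ∈ range t, coordDrop x n • geneV t (n + 1) = Function.update x (Fin.last t) 0 := by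
  ext j
  simp only [Finset.sum_apply, Pi.smul_apply, smul_eq_mul]
  rcases Fin.eq_castSucc_or_eq_last j with ⟨j, rfl⟩ | rfl
  · simp only [geneV_apply_of_lt _ (j := j.castSucc) (by simp), Fin.val_castSucc,
      add_tsub_cancel_right, mul_ite, mul_one, mul_zero]
    rw [sum_congr rfl (g := fun n => if (j : ℕ) ≤ n then coordDrop x n else 0) fun n hn => by
        rw [Nat.mod_eq_of_lt (mem_range.1 hn)],
      ← sum_filter, range_eq_Ico, Ico_filter_le, max_eq_right (Nat.zero_le _),
      sum_Ico_coordDrop x j.isLt.le]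
    simp [coordSeq]
    rfl
  · simp only [geneV_apply_last, add_tsub_cancel_right, Function.update_self]
    exact sum_eq_zero fun n hn => by simp [Nat.div_eq_of_lt (mem_range.1 hn)]

def stairCone (t : ℕ) : Set (Fin (t + 1) → ℝ) :=
  { x | (∀ i j : Fin (t + 1), i ≤ j → (j : ℕ) < t → x j ≤ x i) ∧
      (∀ i : Fin (t + 1), (i : ℕ) < t → 0 ≤ x i) ∧ 0 ≤ x (Fin.last t) }

def lastAxisRay (t : ℕ) : Set (Fin (t + 1) → ℝ) :=
  { x | (∀ i : Fin (t + 1), (i : ℕ) < t → x i = 0) ∧ 0 ≤ x (Fin.last t) }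

theorem coneC_subset_stairCone (m : ℕ) : coneC t m ⊆ stairCone t := by
  rintro x ⟨α, -, hα, rfl⟩
  simp only [stairCone, Set.mem_ofPred_eq, Finset.sum_apply, Pi.smul_apply, smul_eq_mul]
  exact ⟨fun i j hij hj =>
      sum_le_sum fun n _ => mul_le_mul_of_nonneg_left (geneV_anti _ hij hj) (hα n),
    fun i _ => sum_nonneg fun n _ => mul_nonneg (hα n) (geneV_nonneg_s10 _ _),
    sum_nonneg fun n _ => mul_nonneg (hα n) (geneV_nonneg_s10 _ _)⟩

theorem apply_zero_pos_of_mem_coneC (ht : 0 < t) {m : ℕ} {x : Fin (t + 1) → ℝ}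
    (hx : x ∈ coneC t m) : 0 < x 0 := by
  obtain ⟨α, hα0, hα, rfl⟩ := hx
  simp only [Finset.sum_apply, Pi.smul_apply, smul_eq_mul, geneV_apply_zero ht, mul_one]
  exact hα0.trans_le (single_le_sum (fun i _ => hα i) (mem_univ 0))

theorem disjoint_coneC_lastAxisRay (ht : 0 < t) (m : ℕ) :
    Disjoint (coneC t m) (lastAxisRay t) :=
  Set.disjoint_left.2 fun _ hx hray => (apply_zero_pos_of_mem_coneC ht hx).ne' (hray.1 0 ht)

theorem apply_zero_pos_of_mem_diff {x : Fin (t + 1) → ℝ}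
    (hx : x ∈ stairCone t \ lastAxisRay t) : 0 < x 0 := by
  obtain ⟨⟨hanti, hnn, hlast⟩, hray⟩ := hx
  obtain ⟨i, hi, hxi⟩ : ∃ i : Fin (t + 1), (i : ℕ) < t ∧ x i ≠ 0 := by
    by_contra! h
    exact hray ⟨h, hlast⟩
  exact (lt_of_le_of_ne (hnn i hi) hxi.symm).trans_le (hanti 0 i i.zero_le hi)

theorem coordDrop_nonneg {x : Fin (t + 1) → ℝ} (hx : x ∈ stairCone t) (n : ℕ) :
    0 ≤ coordDrop x n := by
  obtain ⟨hanti, hnn, -⟩ := hx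
  unfold coordDrop coordSeq
  split_ifs with h1 h2
  · exact sub_nonneg.2 (hanti _ _ (Fin.mk_le_mk.2 (Nat.le_succ _)) h2)
  · simpa using hnn _ h1
  · omega
  · simp

theorem sum_range_coordDrop (ht : 0 < t) (x : Fin (t + 1) → ℝ) :
    ∑ n ∈ range t, coordDrop x n = x 0 := by
  rw [range_eq_Ico, sum_Ico_coordDrop x (Nat.zero_le t)]
  simp [coordSeq, ht]

theorem sum_range_coordDrop_smul_geneV_shift (ht : 0 < t) (x : Fin (t + 1) → ℝ) (k : ℕ) :
    ∑ n ∈ range t, coordDrop x (k + n) • geneV t (k + n + 1) =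
      Function.update x (Fin.last t) 0 +
        (∑ i ∈ range k, coordDrop x i) • Pi.single (Fin.last t) (t : ℝ) := by
  rw [sum_range_smul_shift (V := fun n => geneV t (n + 1)) (coordDrop_periodic x)
    (geneV_add_period ht), sum_range_coordDrop_smul_geneV]

theorem exists_sum_range_coordDrop_le_lt (ht : 0 < t) {x : Fin (t + 1) → ℝ}
    (hx : x ∈ stairCone t \ lastAxisRay t) :
    ∃ k, ∑ i ∈ range k, coordDrop x i ≤ x (Fin.last t) / t ∧
      x (Fin.last t) / t < ∑ i ∈ range k, coordDrop x i + coordDrop x k := by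
  obtain ⟨q, hq⟩ := exists_lt_nsmul (apply_zero_pos_of_mem_diff hx) (x (Fin.last t) / t)
  have h0 : ∑ i ∈ range 0, coordDrop x i ≤ x (Fin.last t) / t := by
    simpa using div_nonneg hx.1.2.2 (Nat.cast_nonneg t)
  have hq' : x (Fin.last t) / t < ∑ i ∈ range (q * t), coordDrop x i := by
    rwa [(coordDrop_periodic x).sum_range_mul, sum_range_coordDrop ht]
  simpa only [sum_range_succ] using
    exists_le_lt_succ (f := fun n => ∑ i ∈ range n, coordDrop x i) h0 hq'

theorem exists_mem_coneC_succ (ht : 0 < t) {x : Fin (t + 1) → ℝ}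
    (hx : x ∈ stairCone t \ lastAxisRay t) : ∃ k, x ∈ coneC t (k + 1) := by
  obtain ⟨k, hk, hk1⟩ := exists_sum_range_coordDrop_le_lt ht hx
  set c := x (Fin.last t) / t - ∑ i ∈ range k, coordDrop x i with hc
  let α : ℕ → ℝ := fun n =>
    (if n < t then coordDrop x (k + n) else 0) + (if n = t then c else 0) - (if n = 0 then c else 0)
  have hα0 : 0 < α 0 := by
    simp only [α, ht, ht.ne, if_true, if_false, add_zero]
    linarith
  have hα : ∀ n, 0 ≤ α n := by
    intro n
    rcases Nat.eq_zero_or_pos n with rfl | hn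
    · exact hα0.le
    · simp only [α, hn.ne', if_false, sub_zero]
      have := coordDrop_nonneg hx.1 (k + n)
      split_ifs <;> linarith
  refine ⟨k, fun i => α i, hα0, fun i => hα i, ?_⟩
  calc x = Function.update x (Fin.last t) 0 +
        (∑ i ∈ range k, coordDrop x i + c) • Pi.single (Fin.last t) (t : ℝ) := by
        rw [hc, add_sub_cancel]
        ext j
        rcases eq_or_ne j (Fin.last t) with rfl | hj
        · simp [ht.ne']
        · simp [hj]
    _ = ∑ n ∈ range t, coordDrop x (k + n) • geneV t (k + n + 1) +
        c • (geneV t (k + t + 1) - geneV t (k + 1)) := by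
        rw [sum_range_coordDrop_smul_geneV_shift ht, geneV_add_period ht, add_sub_cancel_left,
          add_smul, add_assoc]
    _ = ∑ n ∈ range (t + 1), α n • geneV t (k + n + 1) := by
        simp only [α, add_smul, sub_smul, sum_add_distrib, sum_sub_distrib, ite_smul, zero_smul,
          sum_ite_eq', mem_range, Nat.lt_succ_self, Nat.zero_lt_succ, if_true]
        rw [sum_range_succ, if_neg (lt_irrefl t), add_zero, add_zero k,
          sum_ite_of_true fun n hn => mem_range.1 hn, smul_sub, add_sub_assoc]
    _ = ∑ i : Fin (t + 1), α i • geneV t (k + 1 + i) := by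
        rw [← Fin.sum_univ_eq_sum_range (fun n => α n • geneV t (k + n + 1))]
        simp only [add_right_comm k 1]

end Staircase

/-- The cones `C_m` tile the simplicial cone `{x : x₀ ≥ … ≥ x_{t-1} ≥ 0, x_t ≥ 0}` with
the extreme ray along the last coordinate axis removed. -/
theorem union_of_cones_eq_simplicial_cone_minus_ray (t : ℕ) (ht : 1 ≤ t) :
    (⋃ m ∈ { m : ℕ | 1 ≤ m }, coneC t m)
      = { x : Fin (t + 1) → ℝ |
            (∀ i j : Fin (t + 1), i ≤ j → (j : ℕ) < t → x j ≤ x i) ∧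
            (∀ i : Fin (t + 1), (i : ℕ) < t → 0 ≤ x i) ∧
            0 ≤ x (Fin.last t) }
        \ { x : Fin (t + 1) → ℝ |
            (∀ i : Fin (t + 1), (i : ℕ) < t → x i = 0) ∧ 0 ≤ x (Fin.last t) } := by
  refine Set.Subset.antisymm (Set.iUnion₂_subset fun m _ => Set.subset_sdiff.2
    ⟨coneC_subset_stairCone m, disjoint_coneC_lastAxisRay ht m⟩) fun x hx => ?_
  obtain ⟨k, hk⟩ := exists_mem_coneC_succ ht hx
  exact Set.mem_iUnion₂.2 ⟨k + 1, Nat.le_add_left 1 k, hk⟩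
end

section
/- Fix an integer t ≥ 1. For every integer m ≥ 1, the set of all integer linear combinations of v_m, v_{m+1}, …, v_{m+t} (i.e., the subgroup of ℤ^{t+1} generated by these vectors) equals the lattice Λ := { z ∈ ℤ^{t+1} : t divides z_t } = ℤ^t × tℤ; in particular this lattice is the same for every m. -/
/-!
Write `w = t·e_t` and `q_s` for the vector with ones in the coordinates `< s`. For `t > 0`,
`v_{j+1} = q_{j mod t + 1} + (j div t)·w`, so `w = v_{m+t} - v_m`; as `j` runs through `t`
consecutive integers, `j mod t` runs through all residues, so the span also contains every `q_s`
with `1 ≤ s ≤ t`. The unit vectors `e_r = q_{r+1} - q_r` (`r < t`) and `w` span `ℤ^t × tℤ`, and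
conversely every `v_i` has last coordinate divisible by `t`.
-/

def geneVZ (t : ℕ) (i : ℕ) : Fin (t + 1) → ℤ := fun l =>
  if (l : ℕ) = t then (((i - 1) / t) * t : ℕ)
  else if (l : ℕ) ≤ (i - 1) % t then 1 else 0

def prefixOnes (t s : ℕ) : Fin (t + 1) → ℤ := fun l => if (l : ℕ) < s then 1 else 0

theorem prefixOnes_succ_sub (t : ℕ) (r : Fin t) :
    prefixOnes t (r + 1) - prefixOnes t r = Pi.single r.castSucc 1 := by
  funext l
  simp only [prefixOnes, Pi.sub_apply, Pi.single_apply, Fin.ext_iff, Fin.val_castSucc]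
  split_ifs <;> omega

theorem geneVZ_succ {t : ℕ} (ht : 0 < t) (j : ℕ) :
    geneVZ t (j + 1) =
      prefixOnes t (j % t + 1) + ((j / t : ℕ) : ℤ) • Pi.single (Fin.last t) (t : ℤ) := by
  have hj : j % t < t := Nat.mod_lt j ht
  funext l
  simp only [geneVZ, prefixOnes, Nat.add_sub_cancel, Pi.add_apply, Pi.smul_apply,
    Pi.single_apply, Fin.ext_iff, Fin.val_last, smul_eq_mul, Nat.cast_mul]
  split_ifs <;> omega

def lastDvdLattice (t : ℕ) : Submodule ℤ (Fin (t + 1) → ℤ) where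
  carrier := {z | (t : ℤ) ∣ z (Fin.last t)}
  add_mem' := dvd_add
  zero_mem' := dvd_zero _
  smul_mem' c _ h := h.mul_left c

def geneVZSpan (t m : ℕ) : Submodule ℤ (Fin (t + 1) → ℤ) :=
  Submodule.span ℤ (Set.range fun i : Fin (t + 1) => geneVZ t (m + (i : ℕ)))

theorem geneVZSpan_le_lastDvdLattice (t m : ℕ) : geneVZSpan t m ≤ lastDvdLattice t := by
  refine Submodule.span_le.mpr ?_
  rintro _ ⟨i, rfl⟩
  show (t : ℤ) ∣ geneVZ t (m + i) (Fin.last t)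
  simp only [geneVZ, Fin.val_last, if_true, Nat.cast_mul]
  exact dvd_mul_left _ _

theorem geneVZ_mem_geneVZSpan (t m : ℕ) {k : ℕ} (hk : k ≤ t) :
    geneVZ t (m + k) ∈ geneVZSpan t m :=
  Submodule.subset_span ⟨⟨k, Nat.lt_succ_of_le hk⟩, rfl⟩

theorem single_last_mem_geneVZSpan {t m : ℕ} (ht : 0 < t) (hm : 1 ≤ m) :
    Pi.single (Fin.last t) (t : ℤ) ∈ geneVZSpan t m := by
  obtain ⟨n, rfl⟩ := Nat.exists_eq_add_of_le' hm
  have hperiod : geneVZ t (n + t + 1) - geneVZ t (n + 1) = Pi.single (Fin.last t) (t : ℤ) := by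
    rw [geneVZ_succ ht, geneVZ_succ ht, Nat.add_mod_right, Nat.add_div_right _ ht]
    push_cast
    module
  rw [← hperiod, add_right_comm]
  exact sub_mem (geneVZ_mem_geneVZSpan t _ le_rfl)
    (by simpa using geneVZ_mem_geneVZSpan t _ t.zero_le)

theorem prefixOnes_mem_geneVZSpan {t m : ℕ} (ht : 0 < t) (hm : 1 ≤ m) {s : ℕ} (hs : s ≤ t) :
    prefixOnes t s ∈ geneVZSpan t m := by
  obtain _ | r := s
  · rw [show prefixOnes t 0 = 0 from funext fun _ => if_neg (Nat.not_lt_zero _)]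
    exact zero_mem _
  obtain ⟨n, rfl⟩ := Nat.exists_eq_add_of_le' hm
  have hr : r ∈ (Finset.Ico n (n + t)).image (· % t) := by
    rw [Nat.image_Ico_mod]
    exact Finset.mem_range.mpr hs
  obtain ⟨j, hj, rfl⟩ := Finset.mem_image.mp hr
  obtain ⟨hnj, hjt⟩ := Finset.mem_Ico.mp hj
  obtain ⟨k, rfl⟩ := Nat.exists_eq_add_of_le hnj
  have hgen : geneVZ t (n + k + 1) ∈ geneVZSpan t (n + 1) := by
    rw [add_right_comm]
    exact geneVZ_mem_geneVZSpan t _ (by omega)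
  rw [geneVZ_succ ht] at hgen
  simpa using sub_mem hgen
    (Submodule.smul_mem _ (((n + k) / t : ℕ) : ℤ) (single_last_mem_geneVZSpan ht hm))

theorem single_castSucc_mem_geneVZSpan {t m : ℕ} (ht : 0 < t) (hm : 1 ≤ m) (r : Fin t) :
    Pi.single r.castSucc (1 : ℤ) ∈ geneVZSpan t m := by
  rw [← prefixOnes_succ_sub]
  exact sub_mem (prefixOnes_mem_geneVZSpan ht hm r.isLt) (prefixOnes_mem_geneVZSpan ht hm r.isLt.le)

theorem lastDvdLattice_le_geneVZSpan {t m : ℕ} (ht : 0 < t) (hm : 1 ≤ m) :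
    lastDvdLattice t ≤ geneVZSpan t m := by
  rintro z ⟨c, hc⟩
  rw [← Finset.univ_sum_single z, Fin.sum_univ_castSucc]
  refine add_mem (Submodule.sum_mem _ fun r _ => ?_) ?_
  · rw [← mul_one (z _), ← smul_eq_mul, Pi.single_smul]
    exact Submodule.smul_mem _ _ (single_castSucc_mem_geneVZSpan ht hm r)
  · rw [hc, mul_comm, ← smul_eq_mul, Pi.single_smul]
    exact Submodule.smul_mem _ _ (single_last_mem_geneVZSpan ht hm)

/-- For every `m ≥ 1`, the set of integer linear combinations of `v_m, …, v_{m+t}`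
equals the lattice `Λ = ℤ^t × tℤ = {z ∈ ℤ^{t+1} : t ∣ z_t}`. -/
theorem lattice_generated_by_cone_generators (t : ℕ) (ht : 1 ≤ t) (m : ℕ) (hm : 1 ≤ m) :
    (Submodule.span ℤ (Set.range fun i : Fin (t + 1) => geneVZ t (m + (i : ℕ)))
        : Set (Fin (t + 1) → ℤ))
      = { z : Fin (t + 1) → ℤ | (t : ℤ) ∣ z (Fin.last t) } :=
  congrArg SetLike.coe
    (le_antisymm (geneVZSpan_le_lastDvdLattice t m) (lastDvdLattice_le_geneVZSpan ht hm))
end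

section
/- Fix integers t ≥ 1, m ≥ 1, and n ≥ 1. Then the number of points x ∈ ℤ^{t+1} with t dividing x_t, x ∈ C_m, and ∑_{i=0}^{t} x_i = n equals the number of partitions of n whose smallest part equals m and whose largest part is at most m + t. -/
/-!
With `r = (m - 1) % t`, the generator `v_{m+i}` has ones exactly in the coordinates
`0, …, (r + i) % t` below `t`. Hence in `x = ∑ αᵢ v_{m+i}` the difference `x_l - x_{l+1}` of
consecutive coordinates below `t` (with `0` in place of `x_t`) is the sum of the `αᵢ` with
`(r + i) % t = l`. This determines every `αᵢ` with `0 < i < t` and the sum `α₀ + α_t`, and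
the last coordinate divided by `t` separates `α₀` from `α_t`. These formulas have integer
coefficients apart from the division by `t`, so the generators form a basis of `ℤ^t × tℤ`.
The lattice points of `C_m` are therefore the combinations `∑ cᵢ v_{m+i}` with `cᵢ ∈ ℕ` and
`c₀ ≥ 1`. The coordinates of `v_i` sum to `i`, so the height of such a point is
`∑ cᵢ (m + i)`, and `c` is the multiplicity vector of a partition with smallest part `m` and
parts at most `m + t`.
-/

namespace LatticeCone

def gen (t i : ℕ) (l : Fin (t + 1)) : ℕ :=
  if (l : ℕ) = t then (i - 1) / t * t else if (l : ℕ) ≤ (i - 1) % t then 1 else 0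

lemma geneV_eq_cast (t i : ℕ) : geneV t i = fun l => (gen t i l : ℝ) := by
  funext l
  unfold geneV gen
  split_ifs <;> simp

lemma sum_gen {t i : ℕ} (ht : 0 < t) (hi : 1 ≤ i) : ∑ l, gen t i l = i := by
  have hr : (i - 1) % t < t := Nat.mod_lt _ ht
  have hprefix : ∑ l : Fin t, (if (l : ℕ) ≤ (i - 1) % t then 1 else 0) = (i - 1) % t + 1 := by
    have : (Finset.univ.filter fun l : Fin t => (l : ℕ) ≤ (i - 1) % t) = Finset.Iic ⟨_, hr⟩ := by
      ext; simp [Fin.le_def]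
    rw [Finset.sum_boole, this, Fin.card_Iic, Nat.cast_id]
  rw [Fin.sum_univ_castSucc]
  simp only [gen, Fin.val_castSucc, Fin.val_last, (Fin.is_lt _).ne, ↓reduceIte, hprefix]
  have hdiv := Nat.mod_add_div (i - 1) t
  rw [Nat.mul_comm] at hdiv
  omega

lemma add_div_eq_of_le {t : ℕ} (ht : 0 < t) (s : ℕ) {i : ℕ} (hi : i ≤ t) :
    (s + i) / t = s / t + (if (s + i) % t < s % t then 1 else 0) + if i = t then 1 else 0 := by
  have hs := Nat.mod_add_div s t
  have hr := Nat.mod_lt s ht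
  have key : ∀ d c, c + t * d = s + i → c < t → (s + i) / t = d ∧ (s + i) % t = c :=
    fun d c h hc => (Nat.div_mod_unique ht).2 ⟨h, hc⟩
  rcases Nat.lt_or_ge (s % t + i) t with hlt | hge
  · obtain ⟨hd, hc⟩ := key (s / t) (s % t + i) (by omega) hlt
    rw [hd, hc]
    split_ifs <;> omega
  · obtain ⟨hd, hc⟩ := key (s / t + 1) (s % t + i - t) (by rw [Nat.mul_add]; omega) (by omega)
    rw [hd, hc]
    split_ifs <;> omega

lemma mod_eq_mod_of_add_sub_one_mod_eq {t m : ℕ} (hm : 1 ≤ m) {i j : ℕ}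
    (h : (m + i - 1) % t = (m + j - 1) % t) : i % t = j % t :=
  Nat.ModEq.add_left_cancel' (m - 1) (by rwa [Nat.sub_add_comm hm, Nat.sub_add_comm hm] at h)

section CommRing

variable {R S : Type*} [CommRing R] [CommRing S] {t m : ℕ}

def coneComb (t m : ℕ) (α : Fin (t + 1) → R) (l : Fin (t + 1)) : R :=
  ∑ i, α i * gen t (m + i) l

def prefixCoord (t : ℕ) (x : Fin (t + 1) → R) (l : ℕ) : R :=
  if h : l < t then x ⟨l, by omega⟩ else 0

lemma map_coneComb (f : R →+* S) (α : Fin (t + 1) → R) (l : Fin (t + 1)) :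
    f (coneComb t m α l) = coneComb t m (f ∘ α) l := by
  simp [coneComb, map_sum]

lemma map_prefixCoord (f : R →+* S) (x : Fin (t + 1) → R) (l : ℕ) :
    f (prefixCoord t x l) = prefixCoord t (f ∘ x) l := by
  unfold prefixCoord
  split_ifs <;> simp

lemma sum_coneComb (ht : 0 < t) (hm : 1 ≤ m) (α : Fin (t + 1) → R) :
    ∑ l, coneComb t m α l = ∑ i, α i * (m + i : ℕ) := by
  simp only [coneComb]
  rw [Finset.sum_comm]
  refine Finset.sum_congr rfl fun i _ => ?_
  rw [← Finset.mul_sum, ← Nat.cast_sum, sum_gen ht (by omega)]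

lemma prefixCoord_coneComb (ht : 0 < t) (α : Fin (t + 1) → R) (l : ℕ) :
    prefixCoord t (coneComb t m α) l = ∑ i, α i * if l ≤ (m + i - 1) % t then 1 else 0 := by
  unfold prefixCoord
  split_ifs with hl
  · refine Finset.sum_congr rfl fun i _ => ?_
    simp [gen, hl.ne]
  · refine (Finset.sum_eq_zero fun i _ => ?_).symm
    have := Nat.mod_lt (m + i - 1) ht
    rw [if_neg (by omega), mul_zero]

lemma prefixCoord_sub_prefixCoord (ht : 0 < t) (α : Fin (t + 1) → R) {a b : ℕ} (hab : a ≤ b) :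
    prefixCoord t (coneComb t m α) a - prefixCoord t (coneComb t m α) b
      = ∑ i, α i * if a ≤ (m + i - 1) % t ∧ (m + i - 1) % t < b then 1 else 0 := by
  rw [prefixCoord_coneComb ht, prefixCoord_coneComb ht, ← Finset.sum_sub_distrib]
  refine Finset.sum_congr rfl fun i _ => ?_
  rw [← mul_sub]
  congr 1
  split_ifs <;> first | omega | simp

lemma coeff_eq_of_pos_of_lt (ht : 0 < t) (hm : 1 ≤ m) (α : Fin (t + 1) → R) {j : Fin (t + 1)}
    (hj0 : 0 < (j : ℕ)) (hjt : (j : ℕ) < t) :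
    α j = prefixCoord t (coneComb t m α) ((m + j - 1) % t)
      - prefixCoord t (coneComb t m α) ((m + j - 1) % t + 1) := by
  rw [prefixCoord_sub_prefixCoord ht α (Nat.le_succ _), Finset.sum_eq_single j]
  · simp
  · intro i _ hij
    suffices (m + i - 1) % t ≠ (m + j - 1) % t by rw [if_neg (by omega), mul_zero]
    intro h
    have := mod_eq_mod_of_add_sub_one_mod_eq hm h
    rw [Nat.mod_eq_of_lt hjt] at this
    rcases (Fin.is_le i).lt_or_eq with hit | hit
    · exact hij (Fin.ext (by rwa [Nat.mod_eq_of_lt hit] at this))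
    · rw [hit, Nat.mod_self] at this
      omega
  · simp

lemma coeff_zero_add_coeff_last (ht : 0 < t) (hm : 1 ≤ m) (α : Fin (t + 1) → R) :
    α 0 + α (Fin.last t) = prefixCoord t (coneComb t m α) ((m - 1) % t)
      - prefixCoord t (coneComb t m α) ((m - 1) % t + 1) := by
  have hlast : (m + t - 1) % t = (m - 1) % t := by
    rw [Nat.sub_add_comm hm, Nat.add_mod_right]
  have hne : (0 : Fin (t + 1)) ≠ Fin.last t :=
    Fin.ext_iff.not.2 (by rw [Fin.val_zero, Fin.val_last]; omega)
  rw [prefixCoord_sub_prefixCoord ht α (Nat.le_succ _),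
    Finset.sum_eq_add_of_mem 0 (Fin.last t) (Finset.mem_univ _) (Finset.mem_univ _) hne]
  · simp [hlast]
  · rintro i - ⟨hi0, hit⟩
    have hi0 : (i : ℕ) ≠ 0 := Fin.val_ne_iff.2 hi0
    have hit : (i : ℕ) < t := lt_of_le_of_ne (Fin.is_le i) (Fin.val_ne_iff.2 hit)
    suffices (m + i - 1) % t ≠ (m - 1) % t by rw [if_neg (by omega), mul_zero]
    intro h
    have := mod_eq_mod_of_add_sub_one_mod_eq (j := 0) hm h
    rw [Nat.zero_mod, Nat.mod_eq_of_lt hit] at this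
    exact hi0 this

lemma coneComb_last (ht : 0 < t) (hm : 1 ≤ m) (α : Fin (t + 1) → R) :
    coneComb t m α (Fin.last t) = t * ((((m - 1) / t : ℕ) + 1) * prefixCoord t (coneComb t m α) 0
      - prefixCoord t (coneComb t m α) ((m - 1) % t) + α (Fin.last t)) := by
  set low : Fin (t + 1) → R := fun i => if (m + i - 1) % t < (m - 1) % t then 1 else 0
  have htotal : prefixCoord t (coneComb t m α) 0 = ∑ i, α i := by
    simp [prefixCoord_coneComb ht]
  have hlow : prefixCoord t (coneComb t m α) 0 - prefixCoord t (coneComb t m α) ((m - 1) % t)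
      = ∑ i, α i * low i := by
    simp [prefixCoord_sub_prefixCoord ht α (Nat.zero_le _), low]
  have hgen : ∀ i : Fin (t + 1), (gen t (m + i) (Fin.last t) : R)
      = t * (((m - 1) / t : ℕ) + low i + if i = Fin.last t then 1 else 0) := by
    intro i
    have hdiv := add_div_eq_of_le ht (m - 1) (Fin.is_le i)
    rw [← Nat.sub_add_comm hm] at hdiv
    simp only [gen, Fin.val_last, if_true, hdiv, low, Fin.ext_iff]
    push_cast
    ring
  calc coneComb t m α (Fin.last t)
      = t * (((m - 1) / t : ℕ) * ∑ i, α i + ∑ i, α i * low i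
          + ∑ i, α i * if i = Fin.last t then 1 else 0) := by
        simp only [coneComb, hgen, Finset.mul_sum, ← Finset.sum_add_distrib]
        exact Finset.sum_congr rfl fun i _ => by ring
    _ = _ := by
        rw [← hlow, ← htotal]
        simp only [mul_ite, mul_one, mul_zero, Finset.sum_ite_eq', Finset.mem_univ, ↓reduceIte]
        ring

/-- `T` stands for `x_t / t`; `t * lastCoeff t m x T` is the pairing of `x` with the facet
normal `normalU t (m - 1)`. -/
def lastCoeff (t m : ℕ) (x : Fin (t + 1) → R) (T : R) : R :=
  T - (((m - 1) / t : ℕ) + 1) * prefixCoord t x 0 + prefixCoord t x ((m - 1) % t)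

def coeffsOf (t m : ℕ) (x : Fin (t + 1) → R) (T : R) (j : Fin (t + 1)) : R :=
  if j = 0 then
    prefixCoord t x ((m - 1) % t) - prefixCoord t x ((m - 1) % t + 1) - lastCoeff t m x T
  else if j = Fin.last t then lastCoeff t m x T
  else prefixCoord t x ((m + j - 1) % t) - prefixCoord t x ((m + j - 1) % t + 1)

lemma map_coeffsOf (f : R →+* S) (x : Fin (t + 1) → R) (T : R) (j : Fin (t + 1)) :
    f (coeffsOf t m x T j) = coeffsOf t m (f ∘ x) (f T) j := by
  simp only [coeffsOf, lastCoeff, apply_ite f, map_sub, map_add, map_mul, map_natCast, map_one,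
    map_prefixCoord]

variable [IsDomain R] [CharZero R]

lemma coeffsOf_coneComb (ht : 0 < t) (hm : 1 ≤ m) (α : Fin (t + 1) → R) {T : R}
    (hT : coneComb t m α (Fin.last t) = t * T) : coeffsOf t m (coneComb t m α) T = α := by
  have hlast : lastCoeff t m (coneComb t m α) T = α (Fin.last t) := by
    rw [coneComb_last ht hm, mul_right_injective₀ (Nat.cast_ne_zero.2 ht.ne') |>.eq_iff] at hT
    rw [lastCoeff, ← hT]
    ring
  funext j
  unfold coeffsOf
  split_ifs with h0 hl
  · rw [h0, hlast, ← coeff_zero_add_coeff_last ht hm]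
    ring
  · rw [hl, hlast]
  · exact (coeff_eq_of_pos_of_lt ht hm α (Fin.pos_iff_ne_zero.2 h0)
      (Fin.val_lt_last hl)).symm

lemma coneComb_injective (ht : 0 < t) (hm : 1 ≤ m) :
    Function.Injective (coneComb (R := R) t m) := by
  intro α β h
  have hT := coneComb_last ht hm α
  rw [← coeffsOf_coneComb ht hm α hT, ← coeffsOf_coneComb ht hm β (h ▸ hT), h]

end CommRing

variable {t m n : ℕ}

lemma coneComb_real_eq_sum (α : Fin (t + 1) → ℝ) :
    coneComb t m α = ∑ i, α i • geneV t (m + i) := by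
  funext l
  simp [coneComb, Finset.sum_apply, geneV_eq_cast]

lemma intCast_coneComb (α : Fin (t + 1) → ℤ) (l : Fin (t + 1)) :
    ((coneComb t m α l : ℤ) : ℝ) = coneComb t m (fun i => (α i : ℝ)) l :=
  map_coneComb (Int.castRingHom ℝ) α l

lemma eq_intCast_coeffsOf (ht : 0 < t) (hm : 1 ≤ m) {x : Fin (t + 1) → ℤ} {K : ℤ}
    (hK : x (Fin.last t) = t * K) {α : Fin (t + 1) → ℝ}
    (hα : (fun l => (x l : ℝ)) = coneComb t m α) (i : Fin (t + 1)) :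
    α i = ((coeffsOf t m x K i : ℤ) : ℝ) := by
  have hT : coneComb t m α (Fin.last t) = t * (K : ℝ) := by
    rw [← congrFun hα, hK]
    push_cast
    rfl
  calc α i = coeffsOf t m (coneComb t m α) (K : ℝ) i := by rw [coeffsOf_coneComb ht hm α hT]
    _ = _ := by rw [← hα]; exact (map_coeffsOf (Int.castRingHom ℝ) x K i).symm

def latticePoints (t m n : ℕ) : Set (Fin (t + 1) → ℤ) :=
  {x | (t : ℤ) ∣ x (Fin.last t) ∧ (fun j => (x j : ℝ)) ∈ coneC t m ∧ ∑ i, x i = (n : ℤ)}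

def multiplicities (t m n : ℕ) : Set (Fin (t + 1) → ℕ) :=
  {c | 1 ≤ c 0 ∧ ∑ i, c i * (m + i) = n}

lemma mapsTo_coneComb (ht : 0 < t) (hm : 1 ≤ m) :
    Set.MapsTo (fun c => coneComb t m fun i => (c i : ℤ)) (multiplicities t m n)
      (latticePoints t m n) := by
  rintro c ⟨hc0, hcn⟩
  refine ⟨Dvd.intro _ (coneComb_last ht hm _).symm, ?_, ?_⟩
  · refine ⟨fun i => (c i : ℝ), Nat.cast_pos.2 (by omega), fun i => by positivity, ?_⟩
    rw [← coneComb_real_eq_sum]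
    funext l
    rw [intCast_coneComb]
    simp
  · rw [sum_coneComb ht hm]
    exact_mod_cast hcn

lemma surjOn_coneComb (ht : 0 < t) (hm : 1 ≤ m) :
    Set.SurjOn (fun c => coneComb t m fun i => (c i : ℤ)) (multiplicities t m n)
      (latticePoints t m n) := by
  rintro x ⟨⟨K, hK⟩, ⟨α, hα0, hα, hxα⟩, hxn⟩
  rw [← coneComb_real_eq_sum] at hxα
  have hαk := eq_intCast_coeffsOf ht hm hK hxα
  set k := coeffsOf t m x K
  have hk : ∀ i, (((k i).toNat : ℕ) : ℤ) = k i := fun i =>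
    Int.toNat_of_nonneg (by exact_mod_cast hαk i ▸ hα i)
  have hxk : coneComb t m (fun i => (((k i).toNat : ℕ) : ℤ)) = x := by
    refine funext fun l => Int.cast_injective (α := ℝ) ?_
    rw [intCast_coneComb, congrFun hxα l]
    simp only [hk, ← hαk]
  refine ⟨fun i => (k i).toNat, ⟨?_, ?_⟩, hxk⟩
  · have : 0 < k 0 := by exact_mod_cast hαk 0 ▸ hα0
    show 1 ≤ (k 0).toNat
    omega
  · rw [← hxk, sum_coneComb ht hm] at hxn
    exact_mod_cast hxn

lemma bijOn_coneComb (ht : 0 < t) (hm : 1 ≤ m) :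
    Set.BijOn (fun c => coneComb t m fun i => (c i : ℤ)) (multiplicities t m n)
      (latticePoints t m n) :=
  ⟨mapsTo_coneComb ht hm,
    fun _ _ _ _ h => Nat.cast_injective.comp_left (coneComb_injective ht hm h),
    surjOn_coneComb ht hm⟩

def partsOf (t m : ℕ) (c : Fin (t + 1) → ℕ) : Multiset ℕ :=
  ∑ i, Multiset.replicate (c i) (m + i)

lemma count_partsOf (c : Fin (t + 1) → ℕ) (j : Fin (t + 1)) :
    (partsOf t m c).count (m + j) = c j := by
  rw [partsOf, Multiset.count_sum', Finset.sum_eq_single j]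
  · simp
  · intro i _ hij
    rw [Multiset.count_replicate, if_neg (by simpa [Fin.ext_iff] using hij)]
  · simp

lemma mem_partsOf {c : Fin (t + 1) → ℕ} {a : ℕ} :
    a ∈ partsOf t m c ↔ ∃ i, c i ≠ 0 ∧ m + i = a := by
  simp [partsOf, Multiset.mem_sum, Multiset.mem_replicate, eq_comm]

lemma sum_partsOf (c : Fin (t + 1) → ℕ) :
    (partsOf t m c).sum = ∑ i, c i * (m + i) := by
  simp [partsOf, Multiset.sum_sum]

lemma partsOf_count {s : Multiset ℕ} (hs : ∀ a ∈ s, m ≤ a ∧ a ≤ m + t) :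
    partsOf t m (fun j => s.count (m + j)) = s := by
  ext a
  by_cases ha : a ∈ s
  · obtain ⟨hma, hat⟩ := hs a ha
    set j : Fin (t + 1) := ⟨a - m, by omega⟩
    have hj : m + j = a := show m + (a - m) = a by omega
    rw [← hj, count_partsOf]
  · rw [Multiset.count_eq_zero_of_notMem ha, Multiset.count_eq_zero, mem_partsOf]
    rintro ⟨i, hi, rfl⟩
    exact hi (Multiset.count_eq_zero.2 ha)

def boundedPartitions (t m n : ℕ) : Set n.Partition :=
  {P | m ∈ P.parts ∧ ∀ a ∈ P.parts, m ≤ a ∧ a ≤ m + t}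

lemma bijOn_count (hm : 1 ≤ m) :
    Set.BijOn (fun (P : n.Partition) (j : Fin (t + 1)) => P.parts.count (m + j))
      (boundedPartitions t m n) (multiplicities t m n) := by
  refine ⟨?_, ?_, ?_⟩
  · rintro P ⟨hmP, hP⟩
    refine ⟨Multiset.one_le_count_iff_mem.2 hmP, ?_⟩
    rw [← sum_partsOf, partsOf_count hP, P.parts_sum]
  · rintro P ⟨-, hP⟩ Q ⟨-, hQ⟩ h
    exact Nat.Partition.ext (by rw [← partsOf_count hP, ← partsOf_count hQ]; exact congrArg _ h)
  · rintro c ⟨hc0, hcn⟩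
    have hbounds : ∀ a ∈ partsOf t m c, m ≤ a ∧ a ≤ m + t := by
      intro a ha
      obtain ⟨i, -, rfl⟩ := mem_partsOf.1 ha
      exact ⟨by omega, by have := Fin.is_le i; omega⟩
    refine ⟨⟨partsOf t m c, fun ha => by have := (hbounds _ ha).1; omega,
      (sum_partsOf c).trans hcn⟩, ⟨mem_partsOf.2 ⟨0, by omega, rfl⟩, hbounds⟩, ?_⟩
    funext j
    exact count_partsOf c j

end LatticeCone

theorem lattice_points_in_cone_eq_partitions_general (t m n : ℕ)
    (ht : 1 ≤ t) (hm : 1 ≤ m) :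
    Nat.card { x : Fin (t + 1) → ℤ //
        (t : ℤ) ∣ x (Fin.last t) ∧
        (fun j => (x j : ℝ)) ∈ coneC t m ∧
        ∑ i, x i = (n : ℤ) }
      = Nat.card { P : n.Partition //
          m ∈ P.parts ∧ ∀ a ∈ P.parts, m ≤ a ∧ a ≤ m + t } :=
  calc Nat.card (LatticeCone.latticePoints t m n)
      = Nat.card (LatticeCone.multiplicities t m n) :=
        (LatticeCone.bijOn_coneComb ht hm).ncard_eq.symm
    _ = Nat.card (LatticeCone.boundedPartitions t m n) :=
        (LatticeCone.bijOn_count hm).ncard_eq.symm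

/-- The number of lattice points of `Λ = ℤ^t × tℤ` in `C_m` at height `n` equals the
number of partitions of `n` with smallest part exactly `m` and largest part at most
`m + t`. -/
theorem lattice_points_in_cone_eq_partitions (t m n : ℕ)
    (ht : 1 ≤ t) (hm : 1 ≤ m) (hn : 1 ≤ n) :
    Nat.card { x : Fin (t + 1) → ℤ //
        (t : ℤ) ∣ x (Fin.last t) ∧
        (fun j => (x j : ℝ)) ∈ coneC t m ∧
        ∑ i, x i = (n : ℤ) }
      = Nat.card { P : n.Partition //
          m ∈ P.parts ∧ ∀ a ∈ P.parts, m ≤ a ∧ a ≤ m + t } :=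
  lattice_points_in_cone_eq_partitions_general t m n ht hm
end

section
/- For every integer t ≥ 1 and every integer n ≥ 1, the number p(n,t) of partitions of n whose difference between largest and smallest part is at most t equals the number of pairs (λ, ℓ) where ℓ is a non-negative integer divisible by t and λ is a non-empty partition of n − ℓ whose largest part is at most t. -/
/-!
Write each part `b ≥ 1` as `b = r + t * h` with `1 ≤ r ≤ t`. The bijection sends a partition with
bounded difference `t` to the pair `(t * Σ h, multiset of the residues r)`. Its inverse starts from
the residues and, `Σ h` times, adds `t` to a smallest part: this keeps the difference at most `t`
and the residues fixed, and raises `Σ h` by one. Conversely, while some part exceeds `t`, subtracting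
`t` from a largest part undoes one such step, so every partition with bounded difference `t` arises
in this way from its residues.
-/

namespace BoundedDiff

def residue (t b : ℕ) : ℕ := (b - 1) % t + 1

def height (t b : ℕ) : ℕ := (b - 1) / t

variable {t b : ℕ}

lemma residue_pos : 0 < residue t b := Nat.succ_pos _

lemma residue_le (ht : 0 < t) : residue t b ≤ t := by
  have := Nat.mod_lt (b - 1) ht
  unfold residue; omega

lemma residue_eq_self (hb : 0 < b) (hbt : b ≤ t) : residue t b = b := by
  unfold residue; rw [Nat.mod_eq_of_lt (by omega)]; omega

lemma height_eq_zero_iff (ht : 0 < t) : height t b = 0 ↔ b ≤ t := by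
  rw [height, Nat.div_eq_zero_iff]; omega

lemma residue_add_self (hb : 0 < b) : residue t (b + t) = residue t b := by
  rw [residue, show b + t - 1 = b - 1 + t by omega, Nat.add_mod_right, residue]

lemma height_add_self (ht : 0 < t) (hb : 0 < b) : height t (b + t) = height t b + 1 := by
  rw [height, show b + t - 1 = b - 1 + t by omega, Nat.add_div_right _ ht, height]

lemma residue_add_mul_height (hb : 0 < b) : residue t b + t * height t b = b := by
  have := Nat.mod_add_div (b - 1) t
  unfold residue height; omega

def totalHeight (t : ℕ) (μ : Multiset ℕ) : ℕ := (μ.map (height t)).sum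

variable {μ : Multiset ℕ}

lemma sum_map_residue_add_mul_totalHeight (hpos : ∀ b ∈ μ, 0 < b) :
    (μ.map (residue t)).sum + t * totalHeight t μ = μ.sum := by
  rw [totalHeight, ← Multiset.sum_map_mul_left, ← Multiset.sum_map_add,
    Multiset.map_congr rfl fun b hb => residue_add_mul_height (hpos b hb), Multiset.map_id']

lemma totalHeight_eq_zero_iff (ht : 0 < t) : totalHeight t μ = 0 ↔ ∀ b ∈ μ, b ≤ t := by
  simp [totalHeight, Multiset.sum_eq_zero_iff, height_eq_zero_iff ht]

lemma map_residue_eq_self (h : ∀ b ∈ μ, 0 < b ∧ b ≤ t) : μ.map (residue t) = μ := by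
  rw [Multiset.map_congr rfl fun b hb => residue_eq_self (h b hb).1 (h b hb).2, Multiset.map_id']

structure IsBoundedDiffParts (t : ℕ) (μ : Multiset ℕ) : Prop where
  ne_zero : μ ≠ 0
  pos : ∀ b ∈ μ, 0 < b
  le_add : ∀ a ∈ μ, ∀ b ∈ μ, a ≤ b + t

lemma le_add_of_forall_mem_Icc {m : ℕ} (h : ∀ b ∈ μ, b ∈ Set.Icc m (m + t)) :
    ∀ a ∈ μ, ∀ b ∈ μ, a ≤ b + t := fun a ha b hb => by
  have := h a ha; have := h b hb; simp only [Set.mem_Icc] at *; omega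

noncomputable def raiseMin (t : ℕ) (μ : Multiset ℕ) : Multiset ℕ :=
  (sInf {a | a ∈ μ} + t) ::ₘ μ.erase (sInf {a | a ∈ μ})

lemma isLeast_sInf (h : μ ≠ 0) : IsLeast {a | a ∈ μ} (sInf {a | a ∈ μ}) :=
  ⟨Nat.sInf_mem (Multiset.exists_mem_of_ne_zero h), fun _ => Nat.sInf_le⟩

lemma raiseMin_of_isLeast {m : ℕ} (hm : IsLeast {a | a ∈ μ} m) :
    raiseMin t μ = (m + t) ::ₘ μ.erase m := by
  rw [raiseMin, hm.csInf_eq]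

namespace IsBoundedDiffParts

lemma of_forall_le (hne : μ ≠ 0) (h : ∀ b ∈ μ, 0 < b ∧ b ≤ t) : IsBoundedDiffParts t μ :=
  ⟨hne, fun b hb => (h b hb).1,
    le_add_of_forall_mem_Icc (m := 0) fun b hb => ⟨b.zero_le, by simpa using (h b hb).2⟩⟩

lemma raiseMin (h : IsBoundedDiffParts t μ) : IsBoundedDiffParts t (raiseMin t μ) := by
  obtain ⟨m, hmμ, hmin⟩ : ∃ m, IsLeast {a | a ∈ μ} m := ⟨_, isLeast_sInf h.ne_zero⟩
  rw [raiseMin_of_isLeast ⟨hmμ, hmin⟩]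
  refine ⟨Multiset.cons_ne_zero, fun b hb => ?_, le_add_of_forall_mem_Icc (m := m) fun b hb => ?_⟩
  · rcases Multiset.mem_cons.1 hb with rfl | hb
    · exact Nat.add_pos_left (h.pos _ hmμ) t
    · exact h.pos b (Multiset.mem_of_mem_erase hb)
  · rcases Multiset.mem_cons.1 hb with rfl | hb
    · exact ⟨Nat.le_add_right _ _, le_rfl⟩
    · have hbμ := Multiset.mem_of_mem_erase hb
      exact ⟨hmin hbμ, h.le_add b hbμ _ hmμ⟩

lemma iterate_raiseMin (h : IsBoundedDiffParts t μ) (c : ℕ) :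
    IsBoundedDiffParts t ((BoundedDiff.raiseMin t)^[c] μ) := by
  induction c with
  | zero => exact h
  | succ c ih => rw [Function.iterate_succ_apply']; exact ih.raiseMin

end IsBoundedDiffParts

lemma totalHeight_raiseMin (ht : 0 < t) (h : IsBoundedDiffParts t μ) :
    totalHeight t (raiseMin t μ) = totalHeight t μ + 1 := by
  obtain ⟨m, hm⟩ : ∃ m, IsLeast {a | a ∈ μ} m := ⟨_, isLeast_sInf h.ne_zero⟩
  conv_rhs => rw [← Multiset.cons_erase hm.1]
  simp only [raiseMin_of_isLeast hm, totalHeight, Multiset.map_cons, Multiset.sum_cons,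
    height_add_self ht (h.pos _ hm.1)]
  ring

lemma map_residue_raiseMin (h : IsBoundedDiffParts t μ) :
    (raiseMin t μ).map (residue t) = μ.map (residue t) := by
  obtain ⟨m, hm⟩ : ∃ m, IsLeast {a | a ∈ μ} m := ⟨_, isLeast_sInf h.ne_zero⟩
  conv_rhs => rw [← Multiset.cons_erase hm.1]
  simp only [raiseMin_of_isLeast hm, Multiset.map_cons, residue_add_self (h.pos _ hm.1)]

lemma totalHeight_iterate_raiseMin (ht : 0 < t) (h : IsBoundedDiffParts t μ) (c : ℕ) :
    totalHeight t ((raiseMin t)^[c] μ) = totalHeight t μ + c := by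
  induction c with
  | zero => rfl
  | succ c ih =>
    rw [Function.iterate_succ_apply', totalHeight_raiseMin ht (h.iterate_raiseMin c), ih]; rfl

lemma map_residue_iterate_raiseMin (h : IsBoundedDiffParts t μ) (c : ℕ) :
    ((raiseMin t)^[c] μ).map (residue t) = μ.map (residue t) := by
  induction c with
  | zero => rfl
  | succ c ih => rw [Function.iterate_succ_apply', map_residue_raiseMin (h.iterate_raiseMin c), ih]

lemma sum_iterate_raiseMin (ht : 0 < t) (h : IsBoundedDiffParts t μ) (c : ℕ) :
    ((raiseMin t)^[c] μ).sum = μ.sum + t * c := by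
  rw [← sum_map_residue_add_mul_totalHeight (h.iterate_raiseMin c).pos,
    map_residue_iterate_raiseMin h, totalHeight_iterate_raiseMin ht h,
    ← sum_map_residue_add_mul_totalHeight h.pos]
  ring

/-- Subtracting `t` from a largest part `M > t` gives a partition whose smallest part is `M - t`. -/
lemma exists_raiseMin_eq (h : IsBoundedDiffParts t μ) (hbig : ∃ b ∈ μ, t < b) :
    ∃ ν, IsBoundedDiffParts t ν ∧ raiseMin t ν = μ := by
  obtain ⟨M, hM, hmax⟩ := Multiset.exists_max_image id h.ne_zero
  obtain ⟨b, hb, hbt⟩ := hbig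
  have htM : t < M := hbt.trans_le (hmax b hb)
  have hIcc : ∀ x ∈ (M - t) ::ₘ μ.erase M, x ∈ Set.Icc (M - t) (M - t + t) := by
    intro x hx
    rcases Multiset.mem_cons.1 hx with rfl | hx
    · exact ⟨le_rfl, by omega⟩
    · have hxμ := Multiset.mem_of_mem_erase hx
      have := hmax x hxμ; have := h.le_add M hM x hxμ
      simp only [id, Set.mem_Icc] at *; omega
  refine ⟨(M - t) ::ₘ μ.erase M, ⟨Multiset.cons_ne_zero, fun x hx => ?_,
    le_add_of_forall_mem_Icc hIcc⟩, ?_⟩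
  · exact lt_of_lt_of_le (by omega) (hIcc x hx).1
  · rw [raiseMin_of_isLeast ⟨Multiset.mem_cons_self _ _, fun x hx => (hIcc x hx).1⟩,
      Multiset.erase_cons_head, Nat.sub_add_cancel htM.le, Multiset.cons_erase hM]

lemma iterate_raiseMin_map_residue (ht : 0 < t) (h : IsBoundedDiffParts t μ) :
    (raiseMin t)^[totalHeight t μ] (μ.map (residue t)) = μ := by
  induction hc : totalHeight t μ generalizing μ with
  | zero =>
    rw [totalHeight_eq_zero_iff ht] at hc
    exact map_residue_eq_self fun b hb => ⟨h.pos b hb, hc b hb⟩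
  | succ c ih =>
    have hbig : ∃ b ∈ μ, t < b := by
      by_contra! hle
      rw [(totalHeight_eq_zero_iff ht).2 hle] at hc
      exact c.succ_ne_zero hc.symm
    obtain ⟨ν, hν, rfl⟩ := exists_raiseMin_eq h hbig
    rw [totalHeight_raiseMin ht hν, Nat.add_right_cancel_iff] at hc
    rw [Function.iterate_succ_apply', map_residue_raiseMin hν, ih hν hc]

noncomputable def residuesEquiv (ht : 0 < t) (n : ℕ) :
    { μ : Multiset ℕ // IsBoundedDiffParts t μ ∧ μ.sum = n } ≃
      { q : ℕ × Multiset ℕ //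
          t ∣ q.1 ∧ q.2 ≠ 0 ∧ (∀ a ∈ q.2, 0 < a ∧ a ≤ t) ∧ q.2.sum + q.1 = n } where
  toFun μ := ⟨(t * totalHeight t μ.1, μ.1.map (residue t)), dvd_mul_right _ _,
    by simpa using μ.2.1.ne_zero,
    fun a ha => by
      obtain ⟨b, -, rfl⟩ := Multiset.mem_map.1 ha
      exact ⟨residue_pos, residue_le ht⟩,
    (sum_map_residue_add_mul_totalHeight μ.2.1.pos).trans μ.2.2⟩
  invFun q :=
    have hq := IsBoundedDiffParts.of_forall_le q.2.2.1 q.2.2.2.1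
    ⟨(raiseMin t)^[q.1.1 / t] q.1.2, hq.iterate_raiseMin _, by
      rw [sum_iterate_raiseMin ht hq, Nat.mul_div_cancel' q.2.1, q.2.2.2.2]⟩
  left_inv μ := Subtype.ext <| by
    simp only [Nat.mul_div_cancel_left _ ht]
    exact iterate_raiseMin_map_residue ht μ.2.1
  right_inv q := by
    have hq := IsBoundedDiffParts.of_forall_le q.2.2.1 q.2.2.2.1
    refine Subtype.ext (Prod.ext ?_ ?_)
    · simp only [totalHeight_iterate_raiseMin ht hq, (totalHeight_eq_zero_iff ht).2 fun b hb =>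
        (q.2.2.2.1 b hb).2, zero_add, Nat.mul_div_cancel' q.2.1]
    · simp only [map_residue_iterate_raiseMin hq, map_residue_eq_self q.2.2.2.1]

end BoundedDiff

theorem bounded_diff_count_eq_pairs_general (t n : ℕ) (ht : 1 ≤ t) :
    boundedDiffCount n t
      = Nat.card { q : ℕ × Multiset ℕ //
          t ∣ q.1 ∧ q.2 ≠ 0 ∧ (∀ a ∈ q.2, 0 < a ∧ a ≤ t) ∧ q.2.sum + q.1 = n } := by
  refine Nat.card_congr (Equiv.trans ?_ (BoundedDiff.residuesEquiv ht n))
  exact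
    { toFun := fun P => ⟨P.1.parts, ⟨P.2.1, fun _ => P.1.parts_pos, P.2.2⟩, P.1.parts_sum⟩
      invFun := fun μ => ⟨⟨μ.1, fun hb => μ.2.1.pos _ hb, μ.2.2⟩, μ.2.1.ne_zero, μ.2.1.le_add⟩
      left_inv := fun _ => rfl
      right_inv := fun _ => rfl }

/-- `p(n,t)` equals the number of pairs `(λ, ℓ)` where `ℓ ≥ 0` is divisible by `t` and
`λ` is a non-empty partition (a non-empty multiset of positive parts) of `n - ℓ` with
largest part at most `t`.  The pair is encoded as `q = (ℓ, λ)` with `λ.sum + ℓ = n`. -/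
theorem bounded_diff_count_eq_pairs (t n : ℕ) (ht : 1 ≤ t) (hn : 1 ≤ n) :
    boundedDiffCount n t
      = Nat.card { q : ℕ × Multiset ℕ //
          t ∣ q.1 ∧ q.2 ≠ 0 ∧ (∀ a ∈ q.2, 0 < a ∧ a ≤ t) ∧ q.2.sum + q.1 = n } :=
  bounded_diff_count_eq_pairs_general t n ht
end

section
/- For every integer t ≥ 2, the following identity holds in the ring of formal power series ℤ⟦X⟧: (∑_{n≥1} p̃(n,t)·Xⁿ) · (1 − X^{t−1}) · (1 − X^t) · ∏_{i=1}^{t} (1 − X^i) = X^{t−1}·(1 − X)·∏_{i=1}^{t} (1 − X^i) − X^{t−1}·(1 − X) + X^t·(1 − X^t). -/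
/-- `p̃ n t` is the number of partitions of `n` whose largest part minus smallest part
equals exactly `t`. -/
noncomputable def fixedDiffCount (n t : ℕ) : ℕ :=
  Nat.card { P : n.Partition // P.parts ≠ 0 ∧
    (∀ a ∈ P.parts, ∀ b ∈ P.parts, a ≤ b + t) ∧
    ∃ a ∈ P.parts, ∃ b ∈ P.parts, a = b + t }

/-!
Sorting by the smallest part `s`, and using inclusion–exclusion on whether `s` and `s + t`
occur, the partitions counted by `p̃(·, t)` have generating function
`∑_{s ≥ 1} X^(2s+t) D_{t+1}(s)`, where `D_k(s) = 1 / ∏_{i=s}^{s+k-1} (1 - X^i)` generates the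
partitions with parts in `[s, s+k)`. From `D_k(s) - D_k(s+1) = X^s (1 - X^k) D_{k+1}(s)` one gets
`(1 - X^(t-1)) (1 - X^t) X^(2s+t) D_{t+1}(s) = V(s) - V(s+1)` for
`V(s) = X^(t-1) (X^(s+1) (1 - X^(t-1)) D_t(s) - (1 - X) D_{t-1}(s+1))`.
Since `D_k(s) → 1` as `s → ∞` in the `X`-adic topology, the sum telescopes to
`V(1) + X^(t-1) (1 - X)`, and multiplying by `∏_{i=1}^t (1 - X^i) = 1 / D_t(1)` clears the
remaining denominators.
-/

open PowerSeries Finset Filter Topology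
open scoped PowerSeries.WithPiTopology

theorem HasSum.eq_sub_of_telescoping {G : Type*} [AddCommGroup G] [TopologicalSpace G]
    [IsTopologicalAddGroup G] [T2Space G] {f V : ℕ → G} {a L : G} (hf : HasSum f a)
    (hfV : ∀ n, f n = V n - V (n + 1)) (hV : Tendsto V atTop (𝓝 L)) : a = V 0 - L := by
  refine tendsto_nhds_unique hf.tendsto_sum_nat ?_
  simp_rw [hfV, sum_range_sub']
  exact hV.const_sub _

namespace Nat.Partition

theorem mem_restricted {n : ℕ} {P : ℕ → Prop} [DecidablePred P] {p : n.Partition} :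
    p ∈ restricted n P ↔ ∀ i ∈ p.parts, P i := by
  simp [restricted]

def minMaxParts (n a b : ℕ) : Finset n.Partition :=
  univ.filter fun p => a ∈ p.parts ∧ b ∈ p.parts ∧ ∀ i ∈ p.parts, i ∈ Icc a b

theorem card_minMaxParts (n a b : ℕ) :
    (#(minMaxParts n a b) : ℤ) = #(restricted n (· ∈ Icc a b))
      - #(restricted n (· ∈ (Icc a b).erase a)) - #(restricted n (· ∈ (Icc a b).erase b))
      + #(restricted n (· ∈ ((Icc a b).erase a).erase b)) := by
  have hdiff : minMaxParts n a b = restricted n (· ∈ Icc a b) \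
      (restricted n (· ∈ (Icc a b).erase a) ∪ restricted n (· ∈ (Icc a b).erase b)) := by
    ext p
    simp only [minMaxParts, mem_filter, mem_univ, true_and, Finset.mem_sdiff, Finset.mem_union,
      mem_restricted, mem_erase]
    grind
  have hinter : restricted n (· ∈ (Icc a b).erase a) ∩ restricted n (· ∈ (Icc a b).erase b) =
      restricted n (· ∈ ((Icc a b).erase a).erase b) := by
    ext p
    simp only [Finset.mem_inter, mem_restricted, mem_erase]
    grind
  have hsub : restricted n (· ∈ (Icc a b).erase a) ∪ restricted n (· ∈ (Icc a b).erase b) ⊆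
      restricted n (· ∈ Icc a b) := by
    intro p
    simp only [Finset.mem_union, mem_restricted, mem_erase]
    grind
  have h1 := card_sdiff_add_card_eq_card hsub
  have h2 := card_union_add_card_inter (restricted n (· ∈ (Icc a b).erase a))
    (restricted n (· ∈ (Icc a b).erase b))
  rw [hdiff, ← hinter]
  omega

variable (R : Type*) [CommRing R]

noncomputable def partsInGenFun (S : Finset ℕ) : R⟦X⟧ :=
  PowerSeries.mk fun n => (#(restricted n (· ∈ S)) : R)

variable {R}

theorem partsInGenFun_mul_prod_one_sub_X_pow {S : Finset ℕ} (hS : 0 ∉ S) :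
    partsInGenFun R S * ∏ i ∈ S, (1 - X ^ i) = 1 := by
  let _ : TopologicalSpace R := ⊥
  have _ : DiscreteTopology R := ⟨rfl⟩
  have hfin : HasProd (fun i => if i ∈ S then ∑' j, (X : R⟦X⟧) ^ (i * j) else 1)
      (∏ i ∈ S, ∑' j, (X : R⟦X⟧) ^ (i * j)) := by
    simpa [prod_ite_mem] using hasProd_prod_of_ne_finset_one (s := S) fun i (hi : i ∉ S) =>
      (if_neg hi : (if i ∈ S then ∑' j, (X : R⟦X⟧) ^ (i * j) else 1) = 1)
  have hgen := (HasProd.zero_mul (f := fun i => if i ∈ S then ∑' j, (X : R⟦X⟧) ^ (i * j) else 1)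
    (hasProd_powerSeriesMk_card_restricted R (· ∈ S))).unique hfin
  rw [if_neg hS, one_mul] at hgen
  rw [partsInGenFun, hgen, ← prod_mul_distrib]
  refine prod_eq_one fun i hi => ?_
  have hi0 : i ≠ 0 := fun h => hS (h ▸ hi)
  simp_rw [pow_mul]
  exact WithPiTopology.tsum_pow_mul_one_sub_of_constantCoeff_eq_zero (by simp [hi0])

theorem partsInGenFun_erase {S : Finset ℕ} (hS : 0 ∉ S) {a : ℕ} (ha : a ∈ S) :
    partsInGenFun R (S.erase a) = (1 - X ^ a) * partsInGenFun R S := by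
  have hS' : 0 ∉ S.erase a := fun h => hS (mem_of_mem_erase h)
  have h := partsInGenFun_mul_prod_one_sub_X_pow (R := R) hS'
  refine (IsUnit.of_mul_eq_one_right _ h).mul_right_cancel ?_
  rw [h, mul_comm (1 - X ^ a), mul_assoc, mul_prod_erase S (fun i => 1 - X ^ i) ha,
    partsInGenFun_mul_prod_one_sub_X_pow hS]

theorem partsInGenFun_Ico_sub_succ {s : ℕ} (hs : 0 < s) (k : ℕ) :
    partsInGenFun R (Ico s (s + k)) - partsInGenFun R (Ico (s + 1) (s + 1 + k)) =
      X ^ s * (1 - X ^ k) * partsInGenFun R (Ico s (s + k + 1)) := by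
  have h0 : 0 ∉ Ico s (s + k + 1) := by simp; omega
  rw [show Ico s (s + k) = (Ico s (s + k + 1)).erase (s + k) by ext; simp; omega,
    show Ico (s + 1) (s + 1 + k) = (Ico s (s + k + 1)).erase s by ext; simp; omega,
    partsInGenFun_erase h0 (by simp), partsInGenFun_erase h0 (by simp)]
  ring

theorem coeff_partsInGenFun_of_forall_lt {S : Finset ℕ} {n : ℕ} (h : ∀ i ∈ S, n < i) :
    coeff n (partsInGenFun R S) = coeff n 1 := by
  rw [partsInGenFun, coeff_mk, coeff_one]
  rcases n with _ | n
  · simp [restricted]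
  · suffices restricted (n + 1) (· ∈ S) = ∅ by simp [this]
    refine filter_eq_empty_iff.2 fun p _ hp => ?_
    obtain ⟨i, hi⟩ := Multiset.exists_mem_of_ne_zero (s := p.parts) fun h0 => by
      simpa [h0] using p.parts_sum.symm
    exact (h i (hp i hi)).not_ge (le_of_mem_parts hi)

theorem tendsto_partsInGenFun_Ico [TopologicalSpace R] (k : ℕ) :
    Tendsto (fun s => partsInGenFun R (Ico s (s + k))) atTop (𝓝 1) := by
  rw [WithPiTopology.tendsto_iff_coeff_tendsto]
  exact fun n => tendsto_atTop_of_eventually_const (i₀ := n + 1) fun s hs =>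
    coeff_partsInGenFun_of_forall_lt fun i hi => by rw [mem_Ico] at hi; omega

theorem mk_card_minMaxParts {a b : ℕ} (ha : 0 < a) (hab : a < b) :
    PowerSeries.mk (fun n => (#(minMaxParts n a b) : R)) =
      X ^ (a + b) * partsInGenFun R (Icc a b) := by
  have h0 : 0 ∉ Icc a b := by simp; omega
  have h0' : 0 ∉ (Icc a b).erase a := fun h => h0 (mem_of_mem_erase h)
  have hcard : PowerSeries.mk (fun n => (#(minMaxParts n a b) : R)) = partsInGenFun R (Icc a b)
      - partsInGenFun R ((Icc a b).erase a) - partsInGenFun R ((Icc a b).erase b)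
      + partsInGenFun R (((Icc a b).erase a).erase b) := by
    ext n
    simp only [partsInGenFun, map_add, map_sub, coeff_mk]
    exact_mod_cast congrArg (Int.cast : ℤ → R) (card_minMaxParts n a b)
  rw [hcard, partsInGenFun_erase h0' (by simp; omega), partsInGenFun_erase h0 (by simp; omega),
    partsInGenFun_erase h0 (by simp; omega)]
  ring

end Nat.Partition

open Nat.Partition

theorem fixedDiffCount_eq_sum_card_minMaxParts (n t : ℕ) :
    fixedDiffCount n t = ∑ s ∈ range n, #(minMaxParts n (s + 1) (s + 1 + t)) := by
  classical
  rw [fixedDiffCount, Nat.card_eq_fintype_card, Fintype.card_subtype, ← card_biUnion]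
  · congr 1
    ext p
    simp only [mem_filter, mem_univ, true_and, mem_biUnion, mem_range, minMaxParts, mem_Icc]
    constructor
    · rintro ⟨hne, hle, a, ha, b, hb, rfl⟩
      have hmin := p.parts.toFinset.min'_mem (Multiset.toFinset_nonempty.2 hne)
      set m := p.parts.toFinset.min' (Multiset.toFinset_nonempty.2 hne)
      rw [Multiset.mem_toFinset] at hmin
      have hm : ∀ i ∈ p.parts, m ≤ i := fun i hi =>
        min'_le _ _ (Multiset.mem_toFinset.2 hi)
      have hpos := p.parts_pos hmin
      have hmn := le_of_mem_parts hmin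
      refine ⟨m - 1, by omega, by rwa [Nat.sub_add_cancel hpos], ?_, fun i hi => ?_⟩
      · have : b + t = m + t := le_antisymm (hle _ ha _ hmin) (by have := hm b hb; omega)
        rwa [Nat.sub_add_cancel hpos, ← this]
      · have := hm i hi; have := hle _ hi _ hmin; omega
    · rintro ⟨s, -, hs, hst, hall⟩
      refine ⟨fun h => by simp [h] at hs, fun a ha b hb => ?_, _, hst, _, hs, rfl⟩
      have := hall a ha; have := hall b hb; omega
  · intro s _ s' _ hss'
    refine disjoint_left.2 fun p hp hp' => hss' ?_
    simp only [minMaxParts, mem_filter, mem_Icc] at hp hp'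
    have := hp.2.2.2 _ hp'.2.1; have := hp'.2.2.2 _ hp.2.1; omega

theorem hasSum_mk_card_minMaxParts (R : Type*) [Semiring R] [TopologicalSpace R] (t : ℕ) :
    HasSum (fun s => PowerSeries.mk fun n => (#(minMaxParts n (s + 1) (s + 1 + t)) : R))
      (PowerSeries.mk fun n => (fixedDiffCount n t : R)) := by
  rw [WithPiTopology.hasSum_iff_hasSum_coeff]
  intro n
  simp only [coeff_mk, fixedDiffCount_eq_sum_card_minMaxParts, Nat.cast_sum]
  refine hasSum_sum_of_ne_finset_zero fun s hs => ?_
  suffices minMaxParts n (s + 1) (s + 1 + t) = ∅ by simp [this]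
  refine filter_eq_empty_iff.2 fun p _ hp => ?_
  have := le_of_mem_parts hp.1
  rw [mem_range] at hs
  omega

theorem mk_fixedDiffCount_mul {R : Type*} [CommRing R] (k : ℕ) :
    (PowerSeries.mk fun n => (fixedDiffCount n (k + 1) : R)) * ((1 - X ^ k) * (1 - X ^ (k + 1))) =
      X ^ k * ((X ^ 2 * (1 - X ^ k) - (1 - X) ^ 2) * partsInGenFun R (Icc 1 (k + 1)) + (1 - X)) := by
  let _ : TopologicalSpace R := ⊥
  have _ : DiscreteTopology R := ⟨rfl⟩
  set V : ℕ → R⟦X⟧ := fun s => X ^ k * (X ^ (s + 1) * (1 - X ^ k) *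
    partsInGenFun R (Ico s (s + (k + 1))) - (1 - X) * partsInGenFun R (Ico (s + 1) (s + 1 + k)))
    with hV
  have hstep : ∀ s, (PowerSeries.mk fun n => (#(minMaxParts n (s + 1) (s + 1 + (k + 1))) : R)) *
      ((1 - X ^ k) * (1 - X ^ (k + 1))) = V (s + 1) - V (s + 1 + 1) := by
    intro s
    have T1 := partsInGenFun_Ico_sub_succ (R := R) (by omega : 0 < s + 1) (k + 1)
    have T2 := partsInGenFun_Ico_sub_succ (R := R) (by omega : 0 < s + 1 + 1) k
    rw [mk_card_minMaxParts (by omega) (by omega), ← Ico_add_one_right_eq_Icc]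
    simp only [hV]
    ring_nf at T1 T2 ⊢
    linear_combination (-X ^ k * (1 - X ^ k) * X ^ (s + 1 + 1)) * T1 + (X ^ k * (1 - X)) * T2
  have hlim : Tendsto (fun s => V (s + 1)) atTop
      (𝓝 (X ^ k * (0 * (1 - X ^ k) * 1 - (1 - X) * 1))) := by
    have hX : Tendsto (fun s => (X : R⟦X⟧) ^ (s + 1 + 1)) atTop (𝓝 0) :=
      (WithPiTopology.isTopologicallyNilpotent_of_constantCoeff_zero (by simp)).comp
        (tendsto_add_atTop_nat 2)
    have hD1 := (tendsto_partsInGenFun_Ico (R := R) (k + 1)).comp (tendsto_add_atTop_nat 1)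
    have hD0 := (tendsto_partsInGenFun_Ico (R := R) k).comp (tendsto_add_atTop_nat 2)
    exact (((hX.mul_const _).mul hD1).sub (hD0.const_mul _)).const_mul _
  rw [((hasSum_mk_card_minMaxParts R (k + 1)).mul_right _).eq_sub_of_telescoping hstep hlim]
  have h0 : 0 ∉ Ico 1 (1 + (k + 1)) := by simp
  simp only [hV, zero_add]
  rw [show Ico (1 + 1) (1 + 1 + k) = (Ico 1 (1 + (k + 1))).erase 1 by ext; simp; omega,
    partsInGenFun_erase h0 (by simp), show Ico 1 (1 + (k + 1)) = Icc 1 (k + 1) by ext; simp; omega]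
  ring

theorem andrews_beck_robbins_general (t : ℕ) :
    (PowerSeries.mk fun n => if n = 0 then 0 else (fixedDiffCount n t : ℤ))
        * (1 - (PowerSeries.X : PowerSeries ℤ) ^ (t - 1))
        * (1 - (PowerSeries.X : PowerSeries ℤ) ^ t)
        * ∏ i ∈ Finset.Icc 1 t, (1 - (PowerSeries.X : PowerSeries ℤ) ^ i)
      = (PowerSeries.X : PowerSeries ℤ) ^ (t - 1) * (1 - PowerSeries.X)
            * ∏ i ∈ Finset.Icc 1 t, (1 - (PowerSeries.X : PowerSeries ℤ) ^ i)
          - (PowerSeries.X : PowerSeries ℤ) ^ (t - 1) * (1 - PowerSeries.X)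
          + (PowerSeries.X : PowerSeries ℤ) ^ t
            * (1 - (PowerSeries.X : PowerSeries ℤ) ^ t) := by
  -- For `t = 0` the truncated `t - 1` is `0`, so both sides vanish.
  rcases t with _ | k
  · simp
  have hF : (PowerSeries.mk fun n => if n = 0 then 0 else (fixedDiffCount n (k + 1) : ℤ)) =
      PowerSeries.mk fun n => (fixedDiffCount n (k + 1) : ℤ) := by
    ext (_ | n) <;> simp [fixedDiffCount_eq_sum_card_minMaxParts]
  have hG := partsInGenFun_mul_prod_one_sub_X_pow (R := ℤ) (S := Icc 1 (k + 1)) (by simp)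
  rw [hF, Nat.add_sub_cancel]
  linear_combination (∏ i ∈ Icc 1 (k + 1), (1 - X ^ i)) * mk_fixedDiffCount_mul (R := ℤ) k +
    X ^ k * (X ^ 2 * (1 - X ^ k) - (1 - X) ^ 2) * hG

/-- The denominator-cleared Andrews–Beck–Robbins identity in `ℤ⟦X⟧`:
`(∑_{n≥1} p̃(n,t) Xⁿ)(1-X^{t-1})(1-X^t)∏_{i=1}^t (1-X^i)
  = X^{t-1}(1-X)∏_{i=1}^t (1-X^i) - X^{t-1}(1-X) + X^t(1-X^t)`. -/
theorem andrews_beck_robbins (t : ℕ) (ht : 2 ≤ t) :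
    (PowerSeries.mk fun n => if n = 0 then 0 else (fixedDiffCount n t : ℤ))
        * (1 - (PowerSeries.X : PowerSeries ℤ) ^ (t - 1))
        * (1 - (PowerSeries.X : PowerSeries ℤ) ^ t)
        * ∏ i ∈ Finset.Icc 1 t, (1 - (PowerSeries.X : PowerSeries ℤ) ^ i)
      = (PowerSeries.X : PowerSeries ℤ) ^ (t - 1) * (1 - PowerSeries.X)
            * ∏ i ∈ Finset.Icc 1 t, (1 - (PowerSeries.X : PowerSeries ℤ) ^ i)
          - (PowerSeries.X : PowerSeries ℤ) ^ (t - 1) * (1 - PowerSeries.X)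
          + (PowerSeries.X : PowerSeries ℤ) ^ t
            * (1 - (PowerSeries.X : PowerSeries ℤ) ^ t) :=
  andrews_beck_robbins_general t
end
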